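/- arXiv:0812.4482 — 12 statements merged into one kernel-verified Lean document; each statement's English description precedes it below -/
import Mathlib

section
/- For any elements g, h of the finite group G, the linear map T_h(g) maps the subspace 𝒞_h onto the subspace 𝒞_{ghg⁻¹}, i.e. T_h(g)(𝒞_h) = 𝒞_{ghg⁻¹}. -/
open scoped TensorProduct

noncomputable section

variable {K : Type*} [Field K] {G : Type*} [Group G]
  {A : Type*} [Ring A] [Algebra K A] {ι : Type*} [Fintype ι]

/-- The subspace `𝒞_h = span{c₁c₂ − c₂·h(c₁) | c₁, c₂ ∈ 𝒞}`. -/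
def commSub (ρ : G → A ≃ₐ[K] A) (h : G) : Submodule K A :=
  Submodule.span K {x | ∃ c₁ c₂ : A, x = c₁ * c₂ - c₂ * ρ h c₁}

/-- The map `T_h(g)(c) = c_e⁻¹ c_{g,g⁻¹}⁻¹ g(c) c_{g,h} c_{gh,g⁻¹}`. -/
def Tmap (ρ : G → A ≃ₐ[K] A) (u : G → G → Aˣ) (ue : Aˣ) (g h : G) (x : A) : A :=
  (↑(ue⁻¹) : A) * (↑((u g g⁻¹)⁻¹) : A) * ρ g x * (↑(u g h) : A) * (↑(u (g * h) g⁻¹) : A)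

/-- The twisted multiplication `m_{g,h}(c′⊗c″) = Σᵢ ξ′ᵢ c′ g(ξ″ᵢ c″) c_{g,h}`. -/
def mMul (ρ : G → A ≃ₐ[K] A) (u : G → G → Aˣ) (ξ₁ ξ₂ : ι → A) (g h : G)
    (c' c'' : A) : A :=
  ∑ i, ξ₁ i * c' * ρ g (ξ₂ i * c'') * (↑(u g h) : A)

/-- The twisted comultiplication `Δ_{g,h}(c) = Σᵢ c c_{g,h}⁻¹ g(ξ′ᵢ) ⊗ ξ″ᵢ`. -/
def ΔCom (ρ : G → A ≃ₐ[K] A) (u : G → G → Aˣ) (ξ₁ ξ₂ : ι → A) (g h : G)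
    (c : A) : A ⊗[K] A :=
  ∑ i, (c * (↑((u g h)⁻¹) : A) * ρ g (ξ₁ i)) ⊗ₜ[K] ξ₂ i

/-- The subspace `𝒞_g ⊗ 𝒞` of `𝒞 ⊗ 𝒞`. -/
def leftTensor (ρ : G → A ≃ₐ[K] A) (g : G) : Submodule K (A ⊗[K] A) :=
  Submodule.span K {z | ∃ x ∈ commSub ρ g, ∃ y : A, z = x ⊗ₜ[K] y}

/-- The subspace `𝒞 ⊗ 𝒞_h` of `𝒞 ⊗ 𝒞`. -/
def rightTensor (ρ : G → A ≃ₐ[K] A) (h : G) : Submodule K (A ⊗[K] A) :=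
  Submodule.span K {z | ∃ x : A, ∃ y ∈ commSub ρ h, z = x ⊗ₜ[K] y}

/-!
Write `T_h(g)(x) = P · g(x) · Q` with the units `P = (c_{g,g⁻¹} c_e)⁻¹`, `Q = c_{g,h} c_{gh,g⁻¹}`,
and put `k = ghg⁻¹`, `W = Q · k(P)`. If `g ∘ h = Ad(W) ∘ k ∘ g`, then
`P g(c₁c₂ − c₂ h(c₁)) Q = c₁'c₂' − c₂' k(c₁')` with `c₁' = P g(c₁) P⁻¹` and `c₂' = P g(c₂) Q`;
as `(c₁, c₂) ↦ (c₁', c₂')` is bijective, `T_h(g)` carries the generators of `𝒞_h` onto those of `𝒞_k`.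
The cocycle identity for `(k, g, g⁻¹)` gives `W = c_{g,h} c_{k,g}⁻¹`, and since `kg = gh` both
`g ∘ h` and `k ∘ g` are conjugates of `ρ(gh)`, by `c_{g,h}` and `c_{k,g}` respectively.
-/

theorem mul_map_twistedComm_mul {σ τ φ : A ≃ₐ[K] A} {P Q : Aˣ}
    (hφ : ∀ a, φ (σ a) * Q * τ P = Q * τ (P * φ a)) (a b : A) :
    (P : A) * φ (a * b - b * σ a) * Q =
      (P * φ a * ↑P⁻¹) * (P * φ b * Q) - (P * φ b * Q) * τ (P * φ a * ↑P⁻¹) := by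
  have hconj : (Q : A) * τ (P * φ a * ↑P⁻¹) = φ (σ a) * Q := by
    rw [map_mul _ _ (↑P⁻¹ : A), ← mul_assoc, ← hφ, mul_assoc, ← map_mul, Units.mul_inv, map_one,
      mul_one]
  calc (P : A) * φ (a * b - b * σ a) * Q
      = P * φ a * (↑P⁻¹ * P) * φ b * Q - P * φ b * (φ (σ a) * Q) := by
        simp only [map_sub, map_mul, Units.inv_mul, mul_one]; noncomm_ring
    _ = _ := by rw [← hconj]; noncomm_ring

theorem image_commSub_eq {H : Type*} {ρ : H → A ≃ₐ[K] A} {h k : H} {φ : A ≃ₐ[K] A} {P Q : Aˣ}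
    (hφ : ∀ a, φ (ρ h a) * Q * ρ k P = Q * ρ k (P * φ a)) :
    (fun x => (P : A) * φ x * Q) '' (commSub ρ h : Set A) = commSub ρ k := by
  let f : A →ₗ[K] A :=
    (LinearMap.mulLeft K (P : A)).comp ((LinearMap.mulRight K (Q : A)).comp φ.toLinearMap)
  have hf : ⇑f = fun x => (P : A) * φ x * Q := funext fun x => (mul_assoc _ _ _).symm
  rw [← hf, commSub, ← Submodule.map_coe, Submodule.map_span, hf, commSub]
  congr 2
  ext y
  constructor
  · rintro ⟨_, ⟨a, b, rfl⟩, rfl⟩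
    exact ⟨_, _, mul_map_twistedComm_mul hφ a b⟩
  · rintro ⟨a, b, rfl⟩
    refine ⟨_, ⟨φ.symm (↑P⁻¹ * a * P), φ.symm (↑P⁻¹ * b * ↑Q⁻¹), rfl⟩, ?_⟩
    dsimp only
    rw [mul_map_twistedComm_mul hφ]
    simp [mul_assoc]

section Cocycle

variable {ρ : G → A ≃ₐ[K] A} {u : G → G → Aˣ} {ue : Aˣ}

theorem map_inv_cocycle_eq
    (hcoc : ∀ g h k : G,
      (↑(u g h) : A) * (↑(u (g * h) k) : A) = ρ g (↑(u h k) : A) * (↑(u g (h * k)) : A))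
    (hue1 : ∀ g : G, (↑(u g 1) : A) = ρ g (↑ue : A)) (g k : G) :
    ρ k (↑(u g g⁻¹ * ue)⁻¹ : A) = ↑(u k g * u (k * g) g⁻¹)⁻¹ := by
  refine (Units.inv_eq_of_mul_eq_one_right ?_).symm
  rw [Units.val_mul, hcoc, mul_inv_cancel, hue1, ← map_mul, ← map_mul, ← Units.val_mul,
    Units.mul_inv, map_one]

theorem map_map_mul_eq_mul_map_map
    (hAd : ∀ (g h : G) (x : A),
      ρ g (ρ h x) = (↑(u g h) : A) * ρ (g * h) x * (↑((u g h)⁻¹) : A))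
    {g h k : G} (hkg : k * g = g * h) (x : A) :
    ρ g (ρ h x) * ↑(u g h * (u k g)⁻¹) = ↑(u g h * (u k g)⁻¹) * ρ k (ρ g x) := by
  simp [hAd, hkg, mul_assoc]

end Cocycle

theorem Tmap_image_commSub_general
    (ρ : G → A ≃ₐ[K] A) (u : G → G → Aˣ) (ue : Aˣ)
    (hAd : ∀ (g h : G) (x : A),
      ρ g (ρ h x) = (↑(u g h) : A) * ρ (g * h) x * (↑((u g h)⁻¹) : A))
    (hcoc : ∀ g h k : G,
      (↑(u g h) : A) * (↑(u (g * h) k) : A) = ρ g (↑(u h k) : A) * (↑(u g (h * k)) : A))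
    (hue1 : ∀ g : G, (↑(u g 1) : A) = ρ g (↑ue : A))
    (g h : G) :
    Tmap ρ u ue g h '' (commSub ρ h : Set A) = (commSub ρ (g * h * g⁻¹) : Set A) := by
  have hkg : g * h * g⁻¹ * g = g * h := by group
  have hT : Tmap ρ u ue g h =
      fun x => ↑(u g g⁻¹ * ue)⁻¹ * ρ g x * ↑(u g h * u (g * h) g⁻¹) := by
    funext x
    simp [Tmap, mul_assoc]
  rw [hT]
  refine image_commSub_eq fun a => ?_
  have hW : ↑(u g h * u (g * h) g⁻¹) * ρ (g * h * g⁻¹) ↑(u g g⁻¹ * ue)⁻¹ =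
      (↑(u g h * (u (g * h * g⁻¹) g)⁻¹) : A) := by
    rw [map_inv_cocycle_eq hcoc hue1, hkg, ← Units.val_mul]
    congr 1
    group
  rw [mul_assoc _ _ (ρ _ _), hW, map_map_mul_eq_mul_map_map hAd hkg, ← hW, map_mul, mul_assoc]

theorem Tmap_image_commSub
    [Fintype G] (ρ : G → A ≃ₐ[K] A) (u : G → G → Aˣ) (ue : Aˣ)
    (hAd : ∀ (g h : G) (x : A),
      ρ g (ρ h x) = (↑(u g h) : A) * ρ (g * h) x * (↑((u g h)⁻¹) : A))
    (hAde : ∀ x : A, ρ (1 : G) x = (↑ue : A) * x * (↑(ue⁻¹) : A))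
    (hcoc : ∀ g h k : G,
      (↑(u g h) : A) * (↑(u (g * h) k) : A) = ρ g (↑(u h k) : A) * (↑(u g (h * k)) : A))
    (hue1 : ∀ g : G, (↑(u g 1) : A) = ρ g (↑ue : A))
    (hue2 : ∀ g : G, (↑(u 1 g) : A) = (↑ue : A))
    (g h : G) :
    Tmap ρ u ue g h '' (commSub ρ h : Set A) = (commSub ρ (g * h * g⁻¹) : Set A) :=
  Tmap_image_commSub_general ρ u ue hAd hcoc hue1 g h
end
end

section
/- For any g ∈ G and any c ∈ 𝒞, the element T_g(g)(c) = c_e⁻¹ c_{g,g⁻¹}⁻¹ g(c) c_{g,g} c_{g²,g⁻¹} is congruent to c modulo the subspace 𝒞_g; equivalently, the induced operator 𝒯(g) restricted to HH₀(𝒞)_g = 𝒞/𝒞_g is the identity. -/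
open scoped TensorProduct

noncomputable section

variable {K : Type*} [Field K] {G : Type*} [Group G]
  {A : Type*} [Ring A] [Algebra K A] {ι : Type*} [Fintype ι]

/-!
Modulo `𝒞_h` a left factor may be moved to the right once it is twisted by `h`. Hence
`v · h(c v⁻¹) ≡ h(c v⁻¹) h(v) = h(c) ≡ c` for every unit `v`. The cocycle condition at
`(g, g, g⁻¹)` together with `c_{g,e} = g(c_e)` gives `c_{g,g} c_{g², g⁻¹} = g(c_{g,g⁻¹} c_e)`,
so `T_g(g)(c)` has exactly this form with `v = (c_{g,g⁻¹} c_e)⁻¹`.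
-/

namespace commSub

omit [Group G]

variable (ρ : G → A ≃ₐ[K] A) (h : G)

theorem mul_sub_mul_map_mem (a b : A) : a * b - b * ρ h a ∈ commSub ρ h :=
  Submodule.subset_span ⟨a, b, rfl⟩

theorem sub_map_mem (c : A) : c - ρ h c ∈ commSub ρ h := by
  simpa using mul_sub_mul_map_mem ρ h c 1

theorem units_mul_map_mul_inv_sub_mem (v : Aˣ) (c : A) :
    (v : A) * ρ h (c * ↑v⁻¹) - c ∈ commSub ρ h := by
  have hswap := mul_sub_mul_map_mem ρ h v (ρ h (c * ↑v⁻¹))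
  rw [← map_mul, mul_assoc, Units.inv_mul, mul_one] at hswap
  convert sub_mem hswap (sub_map_mem ρ h c) using 1
  abel

end commSub

theorem cocycle_mul_cocycle_inv_eq_map (ρ : G → A ≃ₐ[K] A) (u : G → G → Aˣ) (ue : Aˣ)
    (hcoc : ∀ g h k : G,
      (↑(u g h) : A) * (↑(u (g * h) k) : A) = ρ g (↑(u h k) : A) * (↑(u g (h * k)) : A))
    (hue1 : ∀ g : G, (↑(u g 1) : A) = ρ g (↑ue : A)) (g : G) :
    (↑(u g g) : A) * ↑(u (g * g) g⁻¹) = ρ g (↑(u g g⁻¹ * ue)) := by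
  rw [hcoc, mul_inv_cancel, hue1, Units.val_mul, map_mul]

theorem Tmap_diag_congr_id_general
    (ρ : G → A ≃ₐ[K] A) (u : G → G → Aˣ) (ue : Aˣ)
    (hcoc : ∀ g h k : G,
      (↑(u g h) : A) * (↑(u (g * h) k) : A) = ρ g (↑(u h k) : A) * (↑(u g (h * k)) : A))
    (hue1 : ∀ g : G, (↑(u g 1) : A) = ρ g (↑ue : A))
    (g : G) (c : A) :
    Tmap ρ u ue g g c - c ∈ commSub ρ g := by
  have hT : Tmap ρ u ue g g c = ↑(u g g⁻¹ * ue)⁻¹ * ρ g (c * ↑(u g g⁻¹ * ue)) := by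
    rw [Tmap, map_mul, ← cocycle_mul_cocycle_inv_eq_map ρ u ue hcoc hue1, mul_inv_rev]
    simp only [Units.val_mul, mul_assoc]
  simpa only [hT, inv_inv] using commSub.units_mul_map_mul_inv_sub_mem ρ g (u g g⁻¹ * ue)⁻¹ c

theorem Tmap_diag_congr_id
    [Fintype G] (ρ : G → A ≃ₐ[K] A) (u : G → G → Aˣ) (ue : Aˣ)
    (hAd : ∀ (g h : G) (x : A),
      ρ g (ρ h x) = (↑(u g h) : A) * ρ (g * h) x * (↑((u g h)⁻¹) : A))
    (hAde : ∀ x : A, ρ (1 : G) x = (↑ue : A) * x * (↑(ue⁻¹) : A))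
    (hcoc : ∀ g h k : G,
      (↑(u g h) : A) * (↑(u (g * h) k) : A) = ρ g (↑(u h k) : A) * (↑(u g (h * k)) : A))
    (hue1 : ∀ g : G, (↑(u g 1) : A) = ρ g (↑ue : A))
    (hue2 : ∀ g : G, (↑(u 1 g) : A) = (↑ue : A))
    (g : G) (c : A) :
    Tmap ρ u ue g g c - c ∈ commSub ρ g :=
  Tmap_diag_congr_id_general ρ u ue hcoc hue1 g c
end
end

section
/- For any g, h ∈ G, the map m_{g,h}: 𝒞⊗𝒞 → 𝒞 annihilates 𝒞_g ⊗ 𝒞; explicitly, for all c₁, c₂, c″ ∈ 𝒞 one has Σᵢ ξ′ᵢ (c₁c₂ − c₂·g(c₁)) g(ξ″ᵢ c″) c_{g,h} = 0 in 𝒞. -/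
open scoped TensorProduct

noncomputable section

variable {K : Type*} [Field K] {G : Type*} [Group G]
  {A : Type*} [Ring A] [Algebra K A] {ι : Type*} [Fintype ι]

/-! The Casimir element `Σᵢ ξ′ᵢ ⊗ ξ″ᵢ` of a symmetric trace pairing commutes with `𝒞`:
`Σᵢ ξ′ᵢ c ⊗ ξ″ᵢ = Σᵢ ξ′ᵢ ⊗ c ξ″ᵢ`, because expanding `ξ′ᵢ c` in the basis `ξ′` and `c ξ″ᵢ` in the
basis `ξ″` gives coefficients `θ(ξ′ᵢ c ξ″ⱼ)` and `θ(c ξ″ⱼ ξ′ᵢ)`, equal by the trace property.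
Pushing this identity through the bilinear map `a ⊗ b ↦ a c₂ g(b c″) c_{g,h}` with `c = c₁`
moves `c₁` from the left of `c₂` to `g(c₁)` on its right, which is the claim. -/

section Casimir

variable {R : Type*} [CommSemiring R] {B : Type*} [Semiring B] [Algebra R B] (θ : B →ₗ[R] R) (ξ₁ ξ₂ : ι → B)

theorem eq_sum_pairing_smul_of_tmul_symm (hξ : ∀ a : B, a = ∑ i, θ (a * ξ₂ i) • ξ₁ i)
    (hξsym : (∑ i, ξ₁ i ⊗ₜ[R] ξ₂ i) = ∑ i, ξ₂ i ⊗ₜ[R] ξ₁ i) (a : B) :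
    a = ∑ i, θ (a * ξ₁ i) • ξ₂ i := by
  have := congrArg (TensorProduct.lift ((LinearMap.lsmul R B).comp (θ ∘ₗ LinearMap.mulLeft R a)))
    hξsym
  simp only [map_sum, TensorProduct.lift.tmul, LinearMap.comp_apply, LinearMap.mulLeft_apply,
    LinearMap.lsmul_apply] at this
  rw [this]
  exact hξ a

theorem sum_mul_tmul_eq_sum_tmul_mul (htr : ∀ a b : B, θ (a * b) = θ (b * a))
    (hξ : ∀ a : B, a = ∑ i, θ (a * ξ₂ i) • ξ₁ i)
    (hξ' : ∀ a : B, a = ∑ i, θ (a * ξ₁ i) • ξ₂ i) (c : B) :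
    ∑ i, (ξ₁ i * c) ⊗ₜ[R] ξ₂ i = ∑ i, ξ₁ i ⊗ₜ[R] (c * ξ₂ i) :=
  calc ∑ i, (ξ₁ i * c) ⊗ₜ[R] ξ₂ i
      = ∑ i, ∑ j, θ (ξ₁ i * c * ξ₂ j) • (ξ₁ j ⊗ₜ[R] ξ₂ i) := by
        refine Finset.sum_congr rfl fun i _ => ?_
        conv_lhs => rw [hξ (ξ₁ i * c)]
        simp only [TensorProduct.sum_tmul, TensorProduct.smul_tmul']
    _ = ∑ i, ∑ j, θ (c * ξ₂ j * ξ₁ i) • (ξ₁ j ⊗ₜ[R] ξ₂ i) := by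
        refine Finset.sum_congr rfl fun i _ => Finset.sum_congr rfl fun j _ => ?_
        rw [mul_assoc, htr]
    _ = ∑ i, ξ₁ i ⊗ₜ[R] (c * ξ₂ i) := by
        rw [Finset.sum_comm]
        refine Finset.sum_congr rfl fun i _ => ?_
        conv_rhs => rw [hξ' (c * ξ₂ i)]
        simp only [TensorProduct.tmul_sum, TensorProduct.tmul_smul]

theorem sum_bilin_mul_left_eq_sum_bilin_mul_right {M : Type*} [AddCommMonoid M] [Module R M]
    (htr : ∀ a b : B, θ (a * b) = θ (b * a))
    (hξ : ∀ a : B, a = ∑ i, θ (a * ξ₂ i) • ξ₁ i)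
    (hξsym : (∑ i, ξ₁ i ⊗ₜ[R] ξ₂ i) = ∑ i, ξ₂ i ⊗ₜ[R] ξ₁ i) (f : B →ₗ[R] B →ₗ[R] M) (c : B) :
    ∑ i, f (ξ₁ i * c) (ξ₂ i) = ∑ i, f (ξ₁ i) (c * ξ₂ i) := by
  have := congrArg (TensorProduct.lift f) <| sum_mul_tmul_eq_sum_tmul_mul θ ξ₁ ξ₂ htr hξ
    (eq_sum_pairing_smul_of_tmul_symm θ ξ₁ ξ₂ hξ hξsym) c
  simpa only [map_sum, TensorProduct.lift.tmul] using this

end Casimir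

theorem mMul_annihilates_left_general
    (ρ : G → A ≃ₐ[K] A) (u : G → G → Aˣ)
    (θ : A →ₗ[K] K)
    (htr : ∀ a b : A, θ (a * b) = θ (b * a))
    (ξ₁ ξ₂ : ι → A)
    (hξ : ∀ a : A, a = ∑ i, θ (a * ξ₂ i) • ξ₁ i)
    (hξsym : (∑ i, ξ₁ i ⊗ₜ[K] ξ₂ i) = ∑ i, ξ₂ i ⊗ₜ[K] ξ₁ i)
    (g h : G) (c₁ c₂ c'' : A) :
    ∑ i, ξ₁ i * (c₁ * c₂ - c₂ * ρ g c₁) * ρ g (ξ₂ i * c'') * (↑(u g h) : A) = 0 := by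
  let f : A →ₗ[K] A →ₗ[K] A := (LinearMap.mul K A).compl₁₂ (LinearMap.mulRight K c₂)
    (LinearMap.mulRight K (ρ g c'' * u g h) ∘ₗ (ρ g).toLinearMap)
  have hf : ∀ a b, f a b = a * c₂ * ρ g (b * c'') * u g h := fun a b => by
    simp only [f, LinearMap.compl₁₂_apply, LinearMap.mul_apply', LinearMap.mulRight_apply,
      LinearMap.comp_apply, AlgEquiv.toLinearMap_apply, map_mul, mul_assoc]
  have hcasimir := sum_bilin_mul_left_eq_sum_bilin_mul_right θ ξ₁ ξ₂ htr hξ hξsym f c₁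
  simp only [hf] at hcasimir
  calc ∑ i, ξ₁ i * (c₁ * c₂ - c₂ * ρ g c₁) * ρ g (ξ₂ i * c'') * u g h
      = ∑ i, ξ₁ i * c₁ * c₂ * ρ g (ξ₂ i * c'') * u g h
        - ∑ i, ξ₁ i * c₂ * ρ g (c₁ * ξ₂ i * c'') * u g h := by
        rw [← Finset.sum_sub_distrib]
        refine Finset.sum_congr rfl fun i _ => ?_
        simp only [mul_assoc, map_mul]
        noncomm_ring
    _ = 0 := by rw [hcasimir, sub_self]

theorem mMul_annihilates_left
    [Fintype G] (ρ : G → A ≃ₐ[K] A) (u : G → G → Aˣ) (ue : Aˣ)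
    (hAd : ∀ (g h : G) (x : A),
      ρ g (ρ h x) = (↑(u g h) : A) * ρ (g * h) x * (↑((u g h)⁻¹) : A))
    (hAde : ∀ x : A, ρ (1 : G) x = (↑ue : A) * x * (↑(ue⁻¹) : A))
    (hcoc : ∀ g h k : G,
      (↑(u g h) : A) * (↑(u (g * h) k) : A) = ρ g (↑(u h k) : A) * (↑(u g (h * k)) : A))
    (hue1 : ∀ g : G, (↑(u g 1) : A) = ρ g (↑ue : A))
    (hue2 : ∀ g : G, (↑(u 1 g) : A) = (↑ue : A))
    [FiniteDimensional K A] (θ : A →ₗ[K] K)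
    (htr : ∀ a b : A, θ (a * b) = θ (b * a))
    (hnd : ∀ a : A, (∀ b : A, θ (a * b) = 0) → a = 0)
    (hGinv : ∀ (g : G) (a : A), θ (ρ g a) = θ a)
    (ξ₁ ξ₂ : ι → A)
    (hξ : ∀ a : A, a = ∑ i, θ (a * ξ₂ i) • ξ₁ i)
    (hξsym : (∑ i, ξ₁ i ⊗ₜ[K] ξ₂ i) = ∑ i, ξ₂ i ⊗ₜ[K] ξ₁ i)
    (g h : G) (c₁ c₂ c'' : A) :
    ∑ i, ξ₁ i * (c₁ * c₂ - c₂ * ρ g c₁) * ρ g (ξ₂ i * c'') * (↑(u g h) : A) = 0 :=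
  mMul_annihilates_left_general ρ u θ htr ξ₁ ξ₂ hξ hξsym g h c₁ c₂ c''
end
end

section
/- For any g, h, k ∈ G and any c ∈ 𝒞, the following coassociativity identity holds in 𝒞⊗𝒞⊗𝒞: (Δ_{g,h} ⊗ 1)(Δ_{gh,k}(c)) = (1 ⊗ Δ_{h,k})(Δ_{g,hk}(c)), i.e. Σ_{i,j} c c_{gh,k}⁻¹ (gh)(ξ′ᵢ) c_{g,h}⁻¹ g(ξ′ⱼ) ⊗ ξ″ⱼ ⊗ ξ″ᵢ = Σ_{i,j} c c_{g,hk}⁻¹ g(ξ′ⱼ) ⊗ ξ″ⱼ c_{h,k}⁻¹ h(ξ′ᵢ) ⊗ ξ″ᵢ. In particular, the induced comultiplication on HH₀(𝒞) is coassociative. -/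
/-!
Since `θ` is a trace, the Casimir element `ξ = Σᵢ ξ′ᵢ ⊗ ξ″ᵢ` of the pairing commutes with `𝒞`:
`Σᵢ a ξ′ᵢ ⊗ ξ″ᵢ = Σᵢ ξ′ᵢ ⊗ ξ″ᵢ a`. Applying `g ⊗ 1`, a factor on the right of the second leg can
be moved to the left of the first leg at the cost of twisting it by `g`. On the right-hand side
this moves `c_{h,k}⁻¹ h(ξ′ᵢ)` into the first leg, and the cocycle identity
`c_{g,hk}⁻¹ g(c_{h,k}⁻¹) c_{g,h} = c_{gh,k}⁻¹` together with `g ∘ h = Ad(c_{g,h}) ∘ gh` turns the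
result into the left-hand side, term by term in `i`.
-/

open scoped TensorProduct

noncomputable section

variable {K : Type*} [Field K] {G : Type*} [Group G]
  {A : Type*} [Ring A] [Algebra K A] {ι : Type*} [Fintype ι]

open TensorProduct

section Casimir

variable {R S : Type*} [CommSemiring R] [Semiring S] [Algebra R S]
  {θ : S →ₗ[R] R} {ξ₁ ξ₂ : ι → S}

theorem eq_sum_smul_of_casimir_symm (hξ : ∀ a : S, a = ∑ i, θ (a * ξ₂ i) • ξ₁ i)
    (hξsym : (∑ i, ξ₁ i ⊗ₜ[R] ξ₂ i) = ∑ i, ξ₂ i ⊗ₜ[R] ξ₁ i) (a : S) :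
    a = ∑ i, θ (a * ξ₁ i) • ξ₂ i := by
  have h := congrArg (lift ((LinearMap.lsmul R S).comp (θ.comp (LinearMap.mulLeft R a)))) hξsym
  simp only [map_sum, lift.tmul, LinearMap.coe_comp, Function.comp_apply,
    LinearMap.mulLeft_apply, LinearMap.lsmul_apply] at h
  rw [h]
  exact hξ a

theorem casimir_mul_left_eq_mul_right (htr : ∀ a b : S, θ (a * b) = θ (b * a))
    (hξ : ∀ a : S, a = ∑ i, θ (a * ξ₂ i) • ξ₁ i)
    (hξsym : (∑ i, ξ₁ i ⊗ₜ[R] ξ₂ i) = ∑ i, ξ₂ i ⊗ₜ[R] ξ₁ i) (a : S) :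
    (∑ i, (a * ξ₁ i) ⊗ₜ[R] ξ₂ i : S ⊗[R] S) = ∑ i, ξ₁ i ⊗ₜ[R] (ξ₂ i * a) := by
  have htr₃ : ∀ i j, θ (a * ξ₁ i * ξ₂ j) = θ (ξ₂ j * a * ξ₁ i) := fun i j => by
    rw [htr, ← mul_assoc]
  calc (∑ i, (a * ξ₁ i) ⊗ₜ[R] ξ₂ i : S ⊗[R] S)
      = ∑ i, (∑ j, θ (a * ξ₁ i * ξ₂ j) • ξ₁ j) ⊗ₜ[R] ξ₂ i := by
        simp only [← hξ]
    _ = ∑ j, ξ₁ j ⊗ₜ[R] ∑ i, θ (ξ₂ j * a * ξ₁ i) • ξ₂ i := by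
        simp only [sum_tmul, tmul_sum, smul_tmul, htr₃]
        exact Finset.sum_comm
    _ = ∑ j, ξ₁ j ⊗ₜ[R] (ξ₂ j * a) := by
        simp only [← eq_sum_smul_of_casimir_symm hξ hξsym]

theorem casimir_map_mul_right {T F : Type*} [Semiring T] [Algebra R T] [FunLike F S T]
    [AlgHomClass F R S T] (φ : F)
    (htr : ∀ a b : S, θ (a * b) = θ (b * a))
    (hξ : ∀ a : S, a = ∑ i, θ (a * ξ₂ i) • ξ₁ i)
    (hξsym : (∑ i, ξ₁ i ⊗ₜ[R] ξ₂ i) = ∑ i, ξ₂ i ⊗ₜ[R] ξ₁ i) (a : S) :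
    (∑ i, φ (ξ₁ i) ⊗ₜ[R] (ξ₂ i * a) : T ⊗[R] S) = ∑ i, (φ a * φ (ξ₁ i)) ⊗ₜ[R] ξ₂ i := by
  have h := congrArg (LinearMap.rTensor S (AlgHomClass.toAlgHom φ).toLinearMap)
    (casimir_mul_left_eq_mul_right htr hξ hξsym a)
  simpa only [map_sum, LinearMap.rTensor_tmul, AlgHom.toLinearMap_apply, AlgHom.coe_coe,
    map_mul] using h.symm

end Casimir

theorem units_inv_mul_map_inv_mul_eq_inv {M F : Type*} [Monoid M] [FunLike F M M]
    [MonoidHomClass F M M] (f : F) {a b c d : Mˣ} (h : (a * b : M) = f c * d) :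
    (↑d⁻¹ * f ↑c⁻¹ * a : M) = ↑b⁻¹ := by
  refine Units.eq_inv_of_mul_eq_one_right ?_
  rw [mul_assoc _ (a : M), h, mul_assoc, ← mul_assoc (f _), ← map_mul, c.inv_mul, map_one,
    one_mul, d.inv_mul]

theorem ΔCom_coassoc_general
    (ρ : G → A ≃ₐ[K] A) (u : G → G → Aˣ)
    (hAd : ∀ (g h : G) (x : A),
      ρ g (ρ h x) = (↑(u g h) : A) * ρ (g * h) x * (↑((u g h)⁻¹) : A))
    (hcoc : ∀ g h k : G,
      (↑(u g h) : A) * (↑(u (g * h) k) : A) = ρ g (↑(u h k) : A) * (↑(u g (h * k)) : A))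
    (θ : A →ₗ[K] K)
    (htr : ∀ a b : A, θ (a * b) = θ (b * a))
    (ξ₁ ξ₂ : ι → A)
    (hξ : ∀ a : A, a = ∑ i, θ (a * ξ₂ i) • ξ₁ i)
    (hξsym : (∑ i, ξ₁ i ⊗ₜ[K] ξ₂ i) = ∑ i, ξ₂ i ⊗ₜ[K] ξ₁ i)
    (g h k : G) (c : A) :
    (∑ i, ∑ j,
        (c * (↑((u (g * h) k)⁻¹) : A) * ρ (g * h) (ξ₁ i) * (↑((u g h)⁻¹) : A) * ρ g (ξ₁ j))
          ⊗ₜ[K] (ξ₂ j ⊗ₜ[K] ξ₂ i) :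
        A ⊗[K] (A ⊗[K] A)) =
      ∑ i, ∑ j,
        (c * (↑((u g (h * k))⁻¹) : A) * ρ g (ξ₁ j))
          ⊗ₜ[K] ((ξ₂ j * (↑((u h k)⁻¹) : A) * ρ h (ξ₁ i)) ⊗ₜ[K] ξ₂ i) := by
  refine Finset.sum_congr rfl fun i _ => ?_
  have hcasimir := congrArg
    (map (LinearMap.mulLeft K (c * ↑(u g (h * k))⁻¹)) ((mk K A A).flip (ξ₂ i)))
    (casimir_map_mul_right (ρ g) htr hξ hξsym (↑(u h k)⁻¹ * ρ h (ξ₁ i)))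
  simp only [map_sum, map_tmul, LinearMap.mulLeft_apply, LinearMap.flip_apply, mk_apply]
    at hcasimir
  have hcoef : c * ↑(u g (h * k))⁻¹ * ρ g (↑(u h k)⁻¹ * ρ h (ξ₁ i)) =
      c * ↑(u (g * h) k)⁻¹ * ρ (g * h) (ξ₁ i) * ↑(u g h)⁻¹ := by
    rw [map_mul, hAd, ← units_inv_mul_map_inv_mul_eq_inv (ρ g) (hcoc g h k)]
    simp only [mul_assoc]
  simp_rw [← hcoef]
  simpa only [mul_assoc] using hcasimir.symm

theorem ΔCom_coassoc
    [Fintype G] (ρ : G → A ≃ₐ[K] A) (u : G → G → Aˣ) (ue : Aˣ)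
    (hAd : ∀ (g h : G) (x : A),
      ρ g (ρ h x) = (↑(u g h) : A) * ρ (g * h) x * (↑((u g h)⁻¹) : A))
    (hAde : ∀ x : A, ρ (1 : G) x = (↑ue : A) * x * (↑(ue⁻¹) : A))
    (hcoc : ∀ g h k : G,
      (↑(u g h) : A) * (↑(u (g * h) k) : A) = ρ g (↑(u h k) : A) * (↑(u g (h * k)) : A))
    (hue1 : ∀ g : G, (↑(u g 1) : A) = ρ g (↑ue : A))
    (hue2 : ∀ g : G, (↑(u 1 g) : A) = (↑ue : A))
    [FiniteDimensional K A] (θ : A →ₗ[K] K)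
    (htr : ∀ a b : A, θ (a * b) = θ (b * a))
    (hnd : ∀ a : A, (∀ b : A, θ (a * b) = 0) → a = 0)
    (hGinv : ∀ (g : G) (a : A), θ (ρ g a) = θ a)
    (ξ₁ ξ₂ : ι → A)
    (hξ : ∀ a : A, a = ∑ i, θ (a * ξ₂ i) • ξ₁ i)
    (hξsym : (∑ i, ξ₁ i ⊗ₜ[K] ξ₂ i) = ∑ i, ξ₂ i ⊗ₜ[K] ξ₁ i)
    (g h k : G) (c : A) :
    (∑ i, ∑ j,
        (c * (↑((u (g * h) k)⁻¹) : A) * ρ (g * h) (ξ₁ i) * (↑((u g h)⁻¹) : A) * ρ g (ξ₁ j))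
          ⊗ₜ[K] (ξ₂ j ⊗ₜ[K] ξ₂ i) :
        A ⊗[K] (A ⊗[K] A)) =
      ∑ i, ∑ j,
        (c * (↑((u g (h * k))⁻¹) : A) * ρ g (ξ₁ j))
          ⊗ₜ[K] ((ξ₂ j * (↑((u h k)⁻¹) : A) * ρ h (ξ₁ i)) ⊗ₜ[K] ξ₂ i) :=
  ΔCom_coassoc_general ρ u hAd hcoc θ htr ξ₁ ξ₂ hξ hξsym g h k c
end
end

section
/- The functional θ_e(c) = θ(c c_e) is invariant under the twisted G-action: for any g ∈ G and any c ∈ 𝒞, θ(T_e(g)(c) · c_e) = θ(c c_e), where T_e(g)(c) = c_e⁻¹ c_{g,g⁻¹}⁻¹ g(c) c_{g,e} c_{g,g⁻¹}. -/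
open scoped TensorProduct

noncomputable section

variable {K : Type*} [Field K] {G : Type*} [Group G]
  {A : Type*} [Ring A] [Algebra K A] {ι : Type*} [Fintype ι]

theorem apply_units_conj_of_apply_mul_comm {M β : Type*} [Monoid M] {f : M → β}
    (hf : ∀ a b : M, f (a * b) = f (b * a)) (w : Mˣ) (x : M) :
    f (↑w * x * ↑w⁻¹) = f x := by
  rw [hf, ← mul_assoc, Units.inv_mul, one_mul]

theorem θe_G_invariant_general
    (ρ : G → A ≃ₐ[K] A) (u : G → G → Aˣ) (ue : Aˣ)
    (hue1 : ∀ g : G, (↑(u g 1) : A) = ρ g (↑ue : A))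
    (θ : A →ₗ[K] K)
    (htr : ∀ a b : A, θ (a * b) = θ (b * a))
    (hGinv : ∀ (g : G) (a : A), θ (ρ g a) = θ a)
    (g : G) (c : A) :
    θ (((↑(ue⁻¹) : A) * (↑((u g g⁻¹)⁻¹) : A) * ρ g c * (↑(u g 1) : A) * (↑(u g g⁻¹) : A)) *
        (↑ue : A)) =
      θ (c * (↑ue : A)) := by
  -- `c_{g,e} = g(c_e)` makes `T_e(g)(c) c_e` a conjugate of `g(c c_e)`.
  set w : Aˣ := ue⁻¹ * (u g g⁻¹)⁻¹
  calc _ = θ (↑w * ρ g (c * ↑ue) * ↑w⁻¹) := by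
        simp only [w, hue1, map_mul, mul_inv_rev, inv_inv, Units.val_mul, mul_assoc]
    _ = θ (ρ g (c * ↑ue)) := apply_units_conj_of_apply_mul_comm htr w _
    _ = θ (c * ↑ue) := hGinv g _

theorem θe_G_invariant
    [Fintype G] (ρ : G → A ≃ₐ[K] A) (u : G → G → Aˣ) (ue : Aˣ)
    (hAd : ∀ (g h : G) (x : A),
      ρ g (ρ h x) = (↑(u g h) : A) * ρ (g * h) x * (↑((u g h)⁻¹) : A))
    (hAde : ∀ x : A, ρ (1 : G) x = (↑ue : A) * x * (↑(ue⁻¹) : A))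
    (hcoc : ∀ g h k : G,
      (↑(u g h) : A) * (↑(u (g * h) k) : A) = ρ g (↑(u h k) : A) * (↑(u g (h * k)) : A))
    (hue1 : ∀ g : G, (↑(u g 1) : A) = ρ g (↑ue : A))
    (hue2 : ∀ g : G, (↑(u 1 g) : A) = (↑ue : A))
    [FiniteDimensional K A] (θ : A →ₗ[K] K)
    (htr : ∀ a b : A, θ (a * b) = θ (b * a))
    (hnd : ∀ a : A, (∀ b : A, θ (a * b) = 0) → a = 0)
    (hGinv : ∀ (g : G) (a : A), θ (ρ g a) = θ a)
    (ξ₁ ξ₂ : ι → A)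
    (hξ : ∀ a : A, a = ∑ i, θ (a * ξ₂ i) • ξ₁ i)
    (hξsym : (∑ i, ξ₁ i ⊗ₜ[K] ξ₂ i) = ∑ i, ξ₂ i ⊗ₜ[K] ξ₁ i)
    (g : G) (c : A) :
    θ (((↑(ue⁻¹) : A) * (↑((u g g⁻¹)⁻¹) : A) * ρ g c * (↑(u g 1) : A) * (↑(u g g⁻¹) : A)) *
        (↑ue : A)) =
      θ (c * (↑ue : A)) :=
  θe_G_invariant_general ρ u ue hue1 θ htr hGinv g c
end
end

section
/- The symmetric tensor ξ inverse to the Frobenius pairing satisfies the following twisted G-invariance: for any g ∈ G, Σᵢ ξ′ᵢ ⊗ g⁻¹(ξ″ᵢ) = Σᵢ (c_e⁻¹ c_{g,g⁻¹}⁻¹ g(ξ′ᵢ) c_{g,g⁻¹} c_e) ⊗ ξ″ᵢ in 𝒞⊗𝒞. -/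
/-! Write `B(x, y) = θ(xy)`. Expanding `g⁻¹(ξ″ᵢ)` and `c_e⁻¹ c_{g,g⁻¹}⁻¹ g(ξ′ⱼ) c_{g,g⁻¹} c_e` in the dual
bases given by `ξ` (the symmetry of `ξ` supplies the expansion with the roles of `ξ′` and `ξ″`
swapped), both sides become `Σᵢⱼ (coefficient) ξ′ᵢ ⊗ ξ″ⱼ`, and the coefficients agree because the two
maps are adjoint for `B`: since `g ∘ g⁻¹ = Ad(c_{g,g⁻¹} c_e)`, the `G`-invariance and cyclicity of `θ`
move `g⁻¹` across the pairing. -/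

open scoped TensorProduct

noncomputable section

variable {K : Type*} [Field K] {G : Type*} [Group G]
  {A : Type*} [Ring A] [Algebra K A] {ι : Type*} [Fintype ι]

open TensorProduct

section DualExpansion

variable {R M κ : Type*} [CommSemiring R] [AddCommMonoid M] [Module R M] [Fintype κ]
  (B : M →ₗ[R] M →ₗ[R] R) {ξ₁ ξ₂ : κ → M}

theorem sum_smul_swap_of_tmul_symm (hsym : ∑ i, ξ₁ i ⊗ₜ[R] ξ₂ i = ∑ i, ξ₂ i ⊗ₜ[R] ξ₁ i)
    (a : M) : ∑ i, B a (ξ₁ i) • ξ₂ i = ∑ i, B a (ξ₂ i) • ξ₁ i := by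
  simpa using congrArg (TensorProduct.lift ((LinearMap.lsmul R M).comp (B a))) hsym

theorem sum_tmul_apply_eq_sum_apply_tmul_of_adjoint
    (hξ : ∀ a, a = ∑ i, B a (ξ₂ i) • ξ₁ i) (hξ' : ∀ a, a = ∑ i, B a (ξ₁ i) • ξ₂ i)
    {f f' : M → M} (hff' : ∀ x y, B (f x) y = B (f' y) x) :
    ∑ i, ξ₁ i ⊗ₜ[R] f (ξ₂ i) = ∑ i, f' (ξ₁ i) ⊗ₜ[R] ξ₂ i :=
  calc ∑ i, ξ₁ i ⊗ₜ[R] f (ξ₂ i)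
      = ∑ i, ∑ j, B (f (ξ₂ i)) (ξ₁ j) • (ξ₁ i ⊗ₜ[R] ξ₂ j) := by
        refine Finset.sum_congr rfl fun i _ => ?_
        conv_lhs => rw [hξ' (f (ξ₂ i))]
        simp only [tmul_sum, tmul_smul]
    _ = ∑ j, ∑ i, B (f' (ξ₁ j)) (ξ₂ i) • (ξ₁ i ⊗ₜ[R] ξ₂ j) := by
        rw [Finset.sum_comm]
        simp only [hff']
    _ = ∑ j, f' (ξ₁ j) ⊗ₜ[R] ξ₂ j := by
        refine Finset.sum_congr rfl fun j _ => ?_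
        conv_rhs => rw [hξ (f' (ξ₁ j))]
        simp only [sum_tmul, smul_tmul']

end DualExpansion

section TwistedAction

variable {ρ : G → A ≃ₐ[K] A} {u : G → G → Aˣ} {ue : Aˣ}

theorem apply_apply_inv_eq_conj
    (hAd : ∀ (g h : G) (x : A),
      ρ g (ρ h x) = (↑(u g h) : A) * ρ (g * h) x * (↑((u g h)⁻¹) : A))
    (hAde : ∀ x : A, ρ (1 : G) x = (↑ue : A) * x * (↑(ue⁻¹) : A)) (g : G) (x : A) :
    ρ g (ρ g⁻¹ x) = (↑(u g g⁻¹ * ue) : A) * x * ↑(u g g⁻¹ * ue)⁻¹ := by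
  rw [hAd, mul_inv_cancel, hAde, mul_inv_rev]
  simp only [Units.val_mul, mul_assoc]

theorem trace_apply_inv_mul
    (hAd : ∀ (g h : G) (x : A),
      ρ g (ρ h x) = (↑(u g h) : A) * ρ (g * h) x * (↑((u g h)⁻¹) : A))
    (hAde : ∀ x : A, ρ (1 : G) x = (↑ue : A) * x * (↑(ue⁻¹) : A))
    {θ : A →ₗ[K] K} (htr : ∀ a b : A, θ (a * b) = θ (b * a))
    (hGinv : ∀ (g : G) (a : A), θ (ρ g a) = θ a) (g : G) (x y : A) :
    θ (ρ g⁻¹ x * y) =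
      θ ((↑(ue⁻¹) : A) * (↑((u g g⁻¹)⁻¹) : A) * ρ g y * (↑(u g g⁻¹) : A) * (↑ue : A) * x) := by
  calc θ (ρ g⁻¹ x * y)
      = θ (ρ g (y * ρ g⁻¹ x)) := by rw [htr, hGinv]
    _ = θ (ρ g y * ↑(u g g⁻¹ * ue) * x * ↑(u g g⁻¹ * ue)⁻¹) := by
        rw [map_mul, apply_apply_inv_eq_conj hAd hAde]
        simp only [mul_assoc]
    _ = θ (↑(u g g⁻¹ * ue)⁻¹ * (ρ g y * ↑(u g g⁻¹ * ue) * x)) := htr _ _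
    _ = _ := by simp only [mul_inv_rev, Units.val_mul, mul_assoc]

end TwistedAction

theorem ξ_twisted_G_invariance_general
    (ρ : G → A ≃ₐ[K] A) (u : G → G → Aˣ) (ue : Aˣ)
    (hAd : ∀ (g h : G) (x : A),
      ρ g (ρ h x) = (↑(u g h) : A) * ρ (g * h) x * (↑((u g h)⁻¹) : A))
    (hAde : ∀ x : A, ρ (1 : G) x = (↑ue : A) * x * (↑(ue⁻¹) : A))
    (θ : A →ₗ[K] K)
    (htr : ∀ a b : A, θ (a * b) = θ (b * a))
    (hGinv : ∀ (g : G) (a : A), θ (ρ g a) = θ a)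
    (ξ₁ ξ₂ : ι → A)
    (hξ : ∀ a : A, a = ∑ i, θ (a * ξ₂ i) • ξ₁ i)
    (hξsym : (∑ i, ξ₁ i ⊗ₜ[K] ξ₂ i) = ∑ i, ξ₂ i ⊗ₜ[K] ξ₁ i)
    (g : G) :
    (∑ i, ξ₁ i ⊗ₜ[K] ρ g⁻¹ (ξ₂ i)) =
      ∑ i, ((↑(ue⁻¹) : A) * (↑((u g g⁻¹)⁻¹) : A) * ρ g (ξ₁ i) * (↑(u g g⁻¹) : A) * (↑ue : A))
        ⊗ₜ[K] ξ₂ i := by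
  let B : A →ₗ[K] A →ₗ[K] K := (LinearMap.mul K A).compr₂ θ
  have hξ' (a : A) : a = ∑ i, B a (ξ₁ i) • ξ₂ i := by
    rw [sum_smul_swap_of_tmul_symm B hξsym]
    exact hξ a
  exact sum_tmul_apply_eq_sum_apply_tmul_of_adjoint B hξ hξ' (trace_apply_inv_mul hAd hAde htr hGinv g)

theorem ξ_twisted_G_invariance
    [Fintype G] (ρ : G → A ≃ₐ[K] A) (u : G → G → Aˣ) (ue : Aˣ)
    (hAd : ∀ (g h : G) (x : A),
      ρ g (ρ h x) = (↑(u g h) : A) * ρ (g * h) x * (↑((u g h)⁻¹) : A))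
    (hAde : ∀ x : A, ρ (1 : G) x = (↑ue : A) * x * (↑(ue⁻¹) : A))
    (hcoc : ∀ g h k : G,
      (↑(u g h) : A) * (↑(u (g * h) k) : A) = ρ g (↑(u h k) : A) * (↑(u g (h * k)) : A))
    (hue1 : ∀ g : G, (↑(u g 1) : A) = ρ g (↑ue : A))
    (hue2 : ∀ g : G, (↑(u 1 g) : A) = (↑ue : A))
    [FiniteDimensional K A] (θ : A →ₗ[K] K)
    (htr : ∀ a b : A, θ (a * b) = θ (b * a))
    (hnd : ∀ a : A, (∀ b : A, θ (a * b) = 0) → a = 0)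
    (hGinv : ∀ (g : G) (a : A), θ (ρ g a) = θ a)
    (ξ₁ ξ₂ : ι → A)
    (hξ : ∀ a : A, a = ∑ i, θ (a * ξ₂ i) • ξ₁ i)
    (hξsym : (∑ i, ξ₁ i ⊗ₜ[K] ξ₂ i) = ∑ i, ξ₂ i ⊗ₜ[K] ξ₁ i)
    (g : G) :
    (∑ i, ξ₁ i ⊗ₜ[K] ρ g⁻¹ (ξ₂ i)) =
      ∑ i, ((↑(ue⁻¹) : A) * (↑((u g g⁻¹)⁻¹) : A) * ρ g (ξ₁ i) * (↑(u g g⁻¹) : A) * (↑ue : A))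
        ⊗ₜ[K] ξ₂ i :=
  ξ_twisted_G_invariance_general ρ u ue hAd hAde θ htr hGinv ξ₁ ξ₂ hξ hξsym g
end
end

section
/- The twisted G-action acts by algebra automorphisms of the multiplication m: for any g, h, k ∈ G and any c′, c″ ∈ 𝒞, one has the identity in 𝒞: m_{ghg⁻¹, gkg⁻¹}(T_h(g)(c′) ⊗ T_k(g)(c″)) = T_{hk}(g)(m_{h,k}(c′ ⊗ c″)). -/
/-!
Write `E_φ(c) = Σᵢ ξ′ᵢ c φ(ξ″ᵢ)` for the `φ`-twisted Higman map, so that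
`m_{g,h}(c′ ⊗ c″) = E_g(c′) g(c″) c_{g,h}`. Since `ξ` is the Casimir element of a symmetric
Frobenius algebra, elements slide through it (`ξ(a ⊗ 1) = (1 ⊗ a)ξ` and `(a ⊗ 1)ξ = ξ(1 ⊗ a)`),
and it is fixed by every trace-preserving automorphism. Hence `E_φ(ac) = E_φ(c φ(a))`,
`a E_φ(c) = E_φ(c) φ(a)` and `ψ(E_φ(c)) = E_{ψφψ⁻¹}(ψ(c))`. As `g ∘ h ∘ g⁻¹` is `ghg⁻¹` up to
an inner automorphism, both sides of the identity reduce to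
`E_{ghg⁻¹}(g(c′) c_{g,h} c_{ghg⁻¹,g}⁻¹) c_{gh,g⁻¹}⁻¹ gh(c″) c_{gh,k} c_{ghk,g⁻¹}`,
the unit factors being matched by the cocycle identity.
-/

open scoped TensorProduct

noncomputable section

variable {K : Type*} [Field K] {G : Type*} [Group G]
  {A : Type*} [Ring A] [Algebra K A] {ι : Type*} [Fintype ι]

section Casimir

variable (ξ₁ ξ₂ : ι → A)

theorem sum_smul_swap_of_tmul_symm_s10 {θ : A →ₗ[K] K}
    (hξ : ∀ a : A, a = ∑ i, θ (a * ξ₂ i) • ξ₁ i)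
    (hξsym : (∑ i, ξ₁ i ⊗ₜ[K] ξ₂ i) = ∑ i, ξ₂ i ⊗ₜ[K] ξ₁ i) (a : A) :
    a = ∑ i, θ (a * ξ₁ i) • ξ₂ i := by
  have h := congrArg (TensorProduct.lift ((LinearMap.lsmul K A).comp (θ ∘ₗ LinearMap.mulLeft K a)))
    hξsym
  simp only [map_sum, TensorProduct.lift.tmul, LinearMap.comp_apply, LinearMap.mulLeft_apply,
    LinearMap.lsmul_apply] at h
  rw [h]
  exact hξ a

theorem sum_tmul_eq_sum_tmul_sum_smul {θ : A →ₗ[K] K}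
    (hξ : ∀ a : A, a = ∑ i, θ (a * ξ₂ i) • ξ₁ i) (x y : ι → A) :
    ∑ i, x i ⊗ₜ[K] y i = ∑ j, ξ₁ j ⊗ₜ[K] ∑ i, θ (x i * ξ₂ j) • y i := by
  conv_lhs => enter [2, i]; rw [hξ (x i)]
  simp only [TensorProduct.sum_tmul, TensorProduct.tmul_sum, TensorProduct.smul_tmul]
  exact Finset.sum_comm

variable {θ : A →ₗ[K] K} (htr : ∀ a b : A, θ (a * b) = θ (b * a))
  (hξ : ∀ a : A, a = ∑ i, θ (a * ξ₂ i) • ξ₁ i)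
  (hξsym : (∑ i, ξ₁ i ⊗ₜ[K] ξ₂ i) = ∑ i, ξ₂ i ⊗ₜ[K] ξ₁ i)

include htr hξ hξsym

theorem sum_mul_tmul_eq_sum_tmul_mul_s10 (a : A) :
    ∑ i, (ξ₁ i * a) ⊗ₜ[K] ξ₂ i = ∑ i, ξ₁ i ⊗ₜ[K] (a * ξ₂ i) := by
  rw [sum_tmul_eq_sum_tmul_sum_smul ξ₁ ξ₂ hξ]
  refine Finset.sum_congr rfl fun j _ => ?_
  have hθ (i : ι) : θ (ξ₁ i * a * ξ₂ j) = θ (a * ξ₂ j * ξ₁ i) := by rw [mul_assoc, htr]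
  simp only [hθ, ← sum_smul_swap_of_tmul_symm_s10 ξ₁ ξ₂ hξ hξsym]

theorem sum_mul_tmul_eq_sum_tmul_mul' (a : A) :
    ∑ i, (a * ξ₁ i) ⊗ₜ[K] ξ₂ i = ∑ i, ξ₁ i ⊗ₜ[K] (ξ₂ i * a) := by
  rw [sum_tmul_eq_sum_tmul_sum_smul ξ₁ ξ₂ hξ]
  refine Finset.sum_congr rfl fun j _ => ?_
  have hθ (i : ι) : θ (a * ξ₁ i * ξ₂ j) = θ (ξ₂ j * a * ξ₁ i) := by rw [htr, mul_assoc]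
  simp only [hθ, ← sum_smul_swap_of_tmul_symm_s10 ξ₁ ξ₂ hξ hξsym]

theorem sum_map_tmul_map {ψ : A ≃ₐ[K] A} (hψ : ∀ a, θ (ψ a) = θ a) :
    ∑ i, ψ (ξ₁ i) ⊗ₜ[K] ψ (ξ₂ i) = ∑ i, ξ₁ i ⊗ₜ[K] ξ₂ i := by
  rw [sum_tmul_eq_sum_tmul_sum_smul ξ₁ ξ₂ hξ]
  refine Finset.sum_congr rfl fun j _ => ?_
  have hθ (i : ι) : θ (ψ (ξ₁ i) * ξ₂ j) = θ (ψ.symm (ξ₂ j) * ξ₁ i) := by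
    conv_lhs => rw [← ψ.apply_symm_apply (ξ₂ j), ← map_mul, hψ]
    exact htr _ _
  simp only [hθ, ← map_smul, ← map_sum, ← sum_smul_swap_of_tmul_symm_s10 ξ₁ ξ₂ hξ hξsym,
    AlgEquiv.apply_symm_apply]

end Casimir

theorem sum_mul_mul_map_eq_of_sum_tmul_eq (φ : A →ₗ[K] A) (c : A) {x y x' y' : ι → A}
    (h : ∑ i, x i ⊗ₜ[K] y i = ∑ i, x' i ⊗ₜ[K] y' i) :
    ∑ i, x i * c * φ (y i) = ∑ i, x' i * c * φ (y' i) := by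
  simpa [map_sum] using
    congrArg (TensorProduct.lift ((LinearMap.mul K A).compl₁₂ (LinearMap.mulRight K c) φ)) h

def higmanMap (ξ₁ ξ₂ : ι → A) (φ : A ≃ₐ[K] A) (c : A) : A :=
  ∑ i, ξ₁ i * c * φ (ξ₂ i)

section Higman

variable {ξ₁ ξ₂ : ι → A} {θ : A →ₗ[K] K} (htr : ∀ a b : A, θ (a * b) = θ (b * a))
  (hξ : ∀ a : A, a = ∑ i, θ (a * ξ₂ i) • ξ₁ i)
  (hξsym : (∑ i, ξ₁ i ⊗ₜ[K] ξ₂ i) = ∑ i, ξ₂ i ⊗ₜ[K] ξ₁ i)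

include htr hξ hξsym

theorem higmanMap_mul (φ : A ≃ₐ[K] A) (a c : A) :
    higmanMap ξ₁ ξ₂ φ (a * c) = higmanMap ξ₁ ξ₂ φ (c * φ a) := by
  have h := sum_mul_mul_map_eq_of_sum_tmul_eq φ.toLinearMap c
    (sum_mul_tmul_eq_sum_tmul_mul_s10 ξ₁ ξ₂ htr hξ hξsym a)
  simpa [higmanMap, mul_assoc] using h

theorem mul_higmanMap (φ : A ≃ₐ[K] A) (a c : A) :
    a * higmanMap ξ₁ ξ₂ φ c = higmanMap ξ₁ ξ₂ φ c * φ a := by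
  have h := sum_mul_mul_map_eq_of_sum_tmul_eq φ.toLinearMap c
    (sum_mul_tmul_eq_sum_tmul_mul' ξ₁ ξ₂ htr hξ hξsym a)
  simpa [higmanMap, mul_assoc, Finset.mul_sum, Finset.sum_mul] using h

theorem map_higmanMap {φ χ ψ : A ≃ₐ[K] A} (hψ : ∀ a, θ (ψ a) = θ a) (v : Aˣ)
    (hconj : ∀ x, ψ (φ x) = v * χ (ψ x) * ↑v⁻¹) (c : A) :
    ψ (higmanMap ξ₁ ξ₂ φ c) = higmanMap ξ₁ ξ₂ χ (ψ c * v) * ↑v⁻¹ := by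
  have h := sum_mul_mul_map_eq_of_sum_tmul_eq χ.toLinearMap (ψ c * v)
    (sum_map_tmul_map ξ₁ ξ₂ htr hξ hξsym hψ)
  simp only [AlgEquiv.toLinearMap_apply] at h
  rw [higmanMap, higmanMap, ← h, Finset.sum_mul, map_sum]
  refine Finset.sum_congr rfl fun i _ => ?_
  rw [map_mul, map_mul, hconj]
  simp only [mul_assoc]

end Higman

omit [Group G] in
theorem mMul_eq_higmanMap (ρ : G → A ≃ₐ[K] A) (u : G → G → Aˣ) (ξ₁ ξ₂ : ι → A) (g h : G)
    (c' c'' : A) :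
    mMul ρ u ξ₁ ξ₂ g h c' c'' = higmanMap ξ₁ ξ₂ (ρ g) c' * ρ g c'' * u g h := by
  simp only [mMul, higmanMap, map_mul, Finset.sum_mul, mul_assoc]

theorem AlgEquiv.map_units_inv_of_map_eq (φ : A ≃ₐ[K] A) {q w : Aˣ} (h : φ q = w) :
    φ ↑q⁻¹ = ↑w⁻¹ := by
  have hw : Units.map (φ : A →* A) q = w := Units.ext h
  rw [← hw]
  rfl

section TwistedAction

variable (ρ : G → A ≃ₐ[K] A) (u : G → G → Aˣ) (ue : Aˣ)

theorem cocycle_inv_right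
    (hcoc : ∀ g h k : G, (u g h : A) * u (g * h) k = ρ g (u h k) * u g (h * k))
    (hue1 : ∀ g : G, (u g 1 : A) = ρ g ue) (x y : G) :
    (u x y⁻¹ : A) * u (x * y⁻¹) y = ρ x (↑(u y⁻¹ y * ue)) := by
  rw [hcoc, inv_mul_cancel, hue1, Units.val_mul, map_mul]

theorem cocycle_mul_cocycle
    (hcoc : ∀ g h k : G, (u g h : A) * u (g * h) k = ρ g (u h k) * u g (h * k)) (a g k l : G) :
    ρ a (u g k * u (g * k) l) * u a (g * k * l) = u a g * u (a * g) k * u (a * g * k) l := by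
  rw [map_mul, mul_assoc, ← hcoc a (g * k) l, ← mul_assoc, ← hcoc a g k, mul_assoc a g k,
    mul_assoc]

theorem rho_rho_eq_conj
    (hAd : ∀ (g h : G) (x : A), ρ g (ρ h x) = u g h * ρ (g * h) x * ↑(u g h)⁻¹) (g h : G) (x : A) :
    ρ g (ρ h x) = ↑(u g h * (u (g * h * g⁻¹) g)⁻¹) * ρ (g * h * g⁻¹) (ρ g x) *
      ↑(u g h * (u (g * h * g⁻¹) g)⁻¹)⁻¹ := by
  rw [hAd (g * h * g⁻¹) g, inv_mul_cancel_right, hAd g h]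
  simp only [mul_inv_rev, inv_inv, Units.val_mul, mul_assoc, Units.inv_mul_cancel_left]

variable {ρ u ue}
  (hAd : ∀ (g h : G) (x : A), ρ g (ρ h x) = u g h * ρ (g * h) x * ↑(u g h)⁻¹)
  (hcoc : ∀ g h k : G, (u g h : A) * u (g * h) k = ρ g (u h k) * u g (h * k))
  (hue1 : ∀ g : G, (u g 1 : A) = ρ g ue) (hue2 : ∀ g : G, (u 1 g : A) = ue)

include hcoc hue1 hue2 in
theorem inv_mul_inv_eq_rho (g : G) :
    (↑ue⁻¹ : A) * ↑(u g g⁻¹)⁻¹ = ρ g ↑(u g⁻¹ g * ue)⁻¹ := by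
  have h := cocycle_inv_right ρ u ue hcoc hue1 g g
  rw [mul_inv_cancel, hue2, ← Units.val_mul] at h
  rw [(ρ g).map_units_inv_of_map_eq h.symm, mul_inv_rev, Units.val_mul]

include hAd hcoc hue1 hue2 in
theorem rho_conj_inv_mul_inv (g h : G) :
    ρ (g * h * g⁻¹) ((↑ue⁻¹ : A) * ↑(u g g⁻¹)⁻¹) =
      ↑(u (g * h) g⁻¹)⁻¹ * ↑(u (g * h * g⁻¹) g)⁻¹ := by
  have h₁ := cocycle_inv_right ρ u ue hcoc hue1 (g * h) g
  rw [← Units.val_mul] at h₁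
  rw [inv_mul_inv_eq_rho hcoc hue1 hue2, hAd, inv_mul_cancel_right,
    (ρ (g * h)).map_units_inv_of_map_eq h₁.symm]
  simp only [mul_inv_rev, Units.val_mul, mul_assoc, Units.mul_inv_cancel_left]

end TwistedAction

section TwistedMultiplication

variable {ρ : G → A ≃ₐ[K] A} {u : G → G → Aˣ} {ue : Aˣ} {ξ₁ ξ₂ : ι → A} {θ : A →ₗ[K] K}
  (hAd : ∀ (g h : G) (x : A), ρ g (ρ h x) = u g h * ρ (g * h) x * ↑(u g h)⁻¹)
  (hcoc : ∀ g h k : G, (u g h : A) * u (g * h) k = ρ g (u h k) * u g (h * k))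
  (hue1 : ∀ g : G, (u g 1 : A) = ρ g ue) (hue2 : ∀ g : G, (u 1 g : A) = ue)
  (htr : ∀ a b : A, θ (a * b) = θ (b * a))
  (hξ : ∀ a : A, a = ∑ i, θ (a * ξ₂ i) • ξ₁ i)
  (hξsym : (∑ i, ξ₁ i ⊗ₜ[K] ξ₂ i) = ∑ i, ξ₂ i ⊗ₜ[K] ξ₁ i)

include hAd hcoc hue1 hue2 htr hξ hξsym

theorem mMul_Tmap_Tmap_eq (g h k : G) (c' c'' : A) :
    mMul ρ u ξ₁ ξ₂ (g * h * g⁻¹) (g * k * g⁻¹) (Tmap ρ u ue g h c') (Tmap ρ u ue g k c'') =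
      higmanMap ξ₁ ξ₂ (ρ (g * h * g⁻¹)) (ρ g c' * u g h * ↑(u (g * h * g⁻¹) g)⁻¹) *
        ↑(u (g * h) g⁻¹)⁻¹ * ρ (g * h) c'' * u (g * h) k * u (g * h * k) g⁻¹ := by
  have hE : higmanMap ξ₁ ξ₂ (ρ (g * h * g⁻¹)) (Tmap ρ u ue g h c') =
      higmanMap ξ₁ ξ₂ (ρ (g * h * g⁻¹)) (ρ g c' * u g h * ↑(u (g * h * g⁻¹) g)⁻¹) := by
    rw [Tmap, mul_assoc _ (ρ g c'), mul_assoc _ (ρ g c' * _), mul_assoc _ _ (u (g * h) g⁻¹ : A),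
      higmanMap_mul htr hξ hξsym, rho_conj_inv_mul_inv hAd hcoc hue1 hue2]
    simp only [mul_assoc, Units.mul_inv_cancel_left]
  have hT : ρ (g * h * g⁻¹) (Tmap ρ u ue g k c'') * u (g * h * g⁻¹) (g * k * g⁻¹) =
      ↑(u (g * h) g⁻¹)⁻¹ * ρ (g * h) c'' * u (g * h) k * u (g * h * k) g⁻¹ := by
    have hcc := cocycle_mul_cocycle ρ u hcoc (g * h * g⁻¹) g k g⁻¹
    rw [inv_mul_cancel_right] at hcc
    calc ρ (g * h * g⁻¹) (Tmap ρ u ue g k c'') * u (g * h * g⁻¹) (g * k * g⁻¹)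
        = ρ (g * h * g⁻¹) (↑ue⁻¹ * ↑(u g g⁻¹)⁻¹) * ρ (g * h * g⁻¹) (ρ g c'') *
            (ρ (g * h * g⁻¹) (u g k * u (g * k) g⁻¹) * u (g * h * g⁻¹) (g * k * g⁻¹)) := by
          simp only [Tmap, map_mul, mul_assoc]
      _ = ↑(u (g * h) g⁻¹)⁻¹ * ↑(u (g * h * g⁻¹) g)⁻¹ *
            (u (g * h * g⁻¹) g * ρ (g * h) c'' * ↑(u (g * h * g⁻¹) g)⁻¹) *
            (u (g * h * g⁻¹) g * u (g * h) k * u (g * h * k) g⁻¹) := by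
          rw [rho_conj_inv_mul_inv hAd hcoc hue1 hue2, hAd, inv_mul_cancel_right, hcc]
      _ = ↑(u (g * h) g⁻¹)⁻¹ * ρ (g * h) c'' * u (g * h) k * u (g * h * k) g⁻¹ := by
          simp only [mul_assoc, Units.inv_mul_cancel_left]
  rw [mMul_eq_higmanMap, hE, mul_assoc _ (ρ _ _), hT]
  simp only [mul_assoc]

theorem Tmap_mMul_eq (hGinv : ∀ (g : G) (a : A), θ (ρ g a) = θ a) (g h k : G) (c' c'' : A) :
    Tmap ρ u ue g (h * k) (mMul ρ u ξ₁ ξ₂ h k c' c'') =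
      higmanMap ξ₁ ξ₂ (ρ (g * h * g⁻¹)) (ρ g c' * u g h * ↑(u (g * h * g⁻¹) g)⁻¹) *
        ↑(u (g * h) g⁻¹)⁻¹ * ρ (g * h) c'' * u (g * h) k * u (g * h * k) g⁻¹ := by
  have hE : (↑ue⁻¹ : A) * ↑(u g g⁻¹)⁻¹ * ρ g (higmanMap ξ₁ ξ₂ (ρ h) c') =
      higmanMap ξ₁ ξ₂ (ρ (g * h * g⁻¹)) (ρ g c' * u g h * ↑(u (g * h * g⁻¹) g)⁻¹) *
        ↑(u (g * h) g⁻¹)⁻¹ * ↑(u g h)⁻¹ := by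
    rw [map_higmanMap htr hξ hξsym (hGinv g) _ (rho_rho_eq_conj ρ u hAd g h), ← mul_assoc,
      mul_higmanMap htr hξ hξsym, rho_conj_inv_mul_inv hAd hcoc hue1 hue2]
    simp only [mul_inv_rev, inv_inv, Units.val_mul, mul_assoc, Units.inv_mul_cancel_left]
  have hc : (↑(u g h)⁻¹ : A) * (ρ g (ρ h c'') * (ρ g (u h k) * u g (h * k))) =
      ρ (g * h) c'' * u (g * h) k := by
    rw [hAd, ← hcoc]
    simp only [mul_assoc, Units.inv_mul_cancel_left]
  calc Tmap ρ u ue g (h * k) (mMul ρ u ξ₁ ξ₂ h k c' c'')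
      = (↑ue⁻¹ * ↑(u g g⁻¹)⁻¹ * ρ g (higmanMap ξ₁ ξ₂ (ρ h) c')) *
          (ρ g (ρ h c'') * (ρ g (u h k) * u g (h * k))) * u (g * h * k) g⁻¹ := by
        simp only [Tmap, mMul_eq_higmanMap, map_mul, mul_assoc]
    _ = _ := by
        rw [hE, mul_assoc _ (↑(u g h)⁻¹ : A), hc]
        simp only [mul_assoc]

end TwistedMultiplication

theorem Tmap_algebra_automorphism_general
    (ρ : G → A ≃ₐ[K] A) (u : G → G → Aˣ) (ue : Aˣ)
    (hAd : ∀ (g h : G) (x : A),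
      ρ g (ρ h x) = (↑(u g h) : A) * ρ (g * h) x * (↑((u g h)⁻¹) : A))
    (hcoc : ∀ g h k : G,
      (↑(u g h) : A) * (↑(u (g * h) k) : A) = ρ g (↑(u h k) : A) * (↑(u g (h * k)) : A))
    (hue1 : ∀ g : G, (↑(u g 1) : A) = ρ g (↑ue : A))
    (hue2 : ∀ g : G, (↑(u 1 g) : A) = (↑ue : A))
    (θ : A →ₗ[K] K)
    (htr : ∀ a b : A, θ (a * b) = θ (b * a))
    (hGinv : ∀ (g : G) (a : A), θ (ρ g a) = θ a)
    (ξ₁ ξ₂ : ι → A)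
    (hξ : ∀ a : A, a = ∑ i, θ (a * ξ₂ i) • ξ₁ i)
    (hξsym : (∑ i, ξ₁ i ⊗ₜ[K] ξ₂ i) = ∑ i, ξ₂ i ⊗ₜ[K] ξ₁ i)
    (g h k : G) (c' c'' : A) :
    mMul ρ u ξ₁ ξ₂ (g * h * g⁻¹) (g * k * g⁻¹) (Tmap ρ u ue g h c') (Tmap ρ u ue g k c'') =
      Tmap ρ u ue g (h * k) (mMul ρ u ξ₁ ξ₂ h k c' c'') := by
  rw [mMul_Tmap_Tmap_eq hAd hcoc hue1 hue2 htr hξ hξsym,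
    Tmap_mMul_eq hAd hcoc hue1 hue2 htr hξ hξsym hGinv]

theorem Tmap_algebra_automorphism
    [Fintype G] (ρ : G → A ≃ₐ[K] A) (u : G → G → Aˣ) (ue : Aˣ)
    (hAd : ∀ (g h : G) (x : A),
      ρ g (ρ h x) = (↑(u g h) : A) * ρ (g * h) x * (↑((u g h)⁻¹) : A))
    (hAde : ∀ x : A, ρ (1 : G) x = (↑ue : A) * x * (↑(ue⁻¹) : A))
    (hcoc : ∀ g h k : G,
      (↑(u g h) : A) * (↑(u (g * h) k) : A) = ρ g (↑(u h k) : A) * (↑(u g (h * k)) : A))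
    (hue1 : ∀ g : G, (↑(u g 1) : A) = ρ g (↑ue : A))
    (hue2 : ∀ g : G, (↑(u 1 g) : A) = (↑ue : A))
    [FiniteDimensional K A] (θ : A →ₗ[K] K)
    (htr : ∀ a b : A, θ (a * b) = θ (b * a))
    (hnd : ∀ a : A, (∀ b : A, θ (a * b) = 0) → a = 0)
    (hGinv : ∀ (g : G) (a : A), θ (ρ g a) = θ a)
    (ξ₁ ξ₂ : ι → A)
    (hξ : ∀ a : A, a = ∑ i, θ (a * ξ₂ i) • ξ₁ i)
    (hξsym : (∑ i, ξ₁ i ⊗ₜ[K] ξ₂ i) = ∑ i, ξ₂ i ⊗ₜ[K] ξ₁ i)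
    (g h k : G) (c' c'' : A) :
    mMul ρ u ξ₁ ξ₂ (g * h * g⁻¹) (g * k * g⁻¹) (Tmap ρ u ue g h c') (Tmap ρ u ue g k c'') =
      Tmap ρ u ue g (h * k) (mMul ρ u ξ₁ ξ₂ h k c' c'') :=
  Tmap_algebra_automorphism_general ρ u ue hAd hcoc hue1 hue2 θ htr hGinv ξ₁ ξ₂ hξ hξsym g h k c'
    c''
end
end

section
/- Twisted cocommutativity holds: for any g, h ∈ G and any c ∈ 𝒞, the element Δ_{g,h}(c) is congruent to σ((1 ⊗ T_{h⁻¹gh}(h))(Δ_{h, h⁻¹gh}(c))) modulo the subspace 𝒞_g ⊗ 𝒞 + 𝒞 ⊗ 𝒞_h, where σ: 𝒞⊗𝒞 → 𝒞⊗𝒞 is the transposition x⊗y ↦ y⊗x. -/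
open scoped TensorProduct

noncomputable section

variable {K : Type*} [Field K] {G : Type*} [Group G]
  {A : Type*} [Ring A] [Algebra K A] {ι : Type*} [Fintype ι]

/-! Modulo `𝒞_g ⊗ 𝒞` one may move a left factor `a` of the first tensor leg to the right as
`g(a)`. Together with the facts that the Casimir element `ξ = Σᵢ ξ′ᵢ ⊗ ξ″ᵢ` is symmetric,
`ρ`-invariant, and balanced (`ξ′ a ⊗ ξ″ = ξ′ ⊗ a ξ″`), this turns `Δ_{g,h}(c)` into the
flipped twisted coproduct; the twists `c_{g,h}` are matched by the cocycle identity for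
`(g, h, h⁻¹)`, which expresses `c_{g,h}⁻¹` through `c_{gh,h⁻¹}`, `c_{h,h⁻¹}` and `c_e`. -/

section Casimir

variable (θ : A →ₗ[K] K) (ξ₁ ξ₂ : ι → A)

lemma eq_sum_trace_mul_smul_of_symm (hξ : ∀ a : A, a = ∑ i, θ (a * ξ₂ i) • ξ₁ i)
    (hξsym : (∑ i, ξ₁ i ⊗ₜ[K] ξ₂ i) = ∑ i, ξ₂ i ⊗ₜ[K] ξ₁ i) (a : A) :
    a = ∑ i, θ (a * ξ₁ i) • ξ₂ i := by
  have h := congrArg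
    (TensorProduct.lift ((LinearMap.lsmul K A).comp (θ.comp (LinearMap.mulLeft K a)))) hξsym
  simp only [map_sum, TensorProduct.lift.tmul, LinearMap.comp_apply,
    LinearMap.mulLeft_apply, LinearMap.lsmul_apply] at h
  exact (hξ a).trans h.symm

lemma sum_tmul_casimir_of_adjoint (htr : ∀ a b : A, θ (a * b) = θ (b * a))
    (hξ : ∀ a : A, a = ∑ i, θ (a * ξ₂ i) • ξ₁ i)
    (hξsym : (∑ i, ξ₁ i ⊗ₜ[K] ξ₂ i) = ∑ i, ξ₂ i ⊗ₜ[K] ξ₁ i)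
    (φ ψ : A → A) (hadj : ∀ x y, θ (φ x * y) = θ (x * ψ y)) :
    ∑ i, φ (ξ₁ i) ⊗ₜ[K] ξ₂ i = ∑ i, ξ₁ i ⊗ₜ[K] ψ (ξ₂ i) := by
  calc ∑ i, φ (ξ₁ i) ⊗ₜ[K] ξ₂ i
      = ∑ i, (∑ j, θ (φ (ξ₁ i) * ξ₂ j) • ξ₁ j) ⊗ₜ[K] ξ₂ i := by
        simp_rw [← hξ]
    _ = ∑ j, ξ₁ j ⊗ₜ[K] ∑ i, θ (ψ (ξ₂ j) * ξ₁ i) • ξ₂ i := by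
        simp only [TensorProduct.sum_tmul, TensorProduct.smul_tmul, TensorProduct.tmul_sum,
          hadj, htr (ξ₁ _)]
        exact Finset.sum_comm
    _ = ∑ j, ξ₁ j ⊗ₜ[K] ψ (ξ₂ j) := by
        simp_rw [← eq_sum_trace_mul_smul_of_symm θ ξ₁ ξ₂ hξ hξsym]

lemma sum_mul_tmul_casimir (htr : ∀ a b : A, θ (a * b) = θ (b * a))
    (hξ : ∀ a : A, a = ∑ i, θ (a * ξ₂ i) • ξ₁ i)
    (hξsym : (∑ i, ξ₁ i ⊗ₜ[K] ξ₂ i) = ∑ i, ξ₂ i ⊗ₜ[K] ξ₁ i) (a : A) :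
    ∑ i, (ξ₁ i * a) ⊗ₜ[K] ξ₂ i = ∑ i, ξ₁ i ⊗ₜ[K] (a * ξ₂ i) :=
  sum_tmul_casimir_of_adjoint θ ξ₁ ξ₂ htr hξ hξsym _ _ fun x y => by rw [mul_assoc]

lemma sum_mul_mul_tmul_casimir (htr : ∀ a b : A, θ (a * b) = θ (b * a))
    (hξ : ∀ a : A, a = ∑ i, θ (a * ξ₂ i) • ξ₁ i)
    (hξsym : (∑ i, ξ₁ i ⊗ₜ[K] ξ₂ i) = ∑ i, ξ₂ i ⊗ₜ[K] ξ₁ i) (a b : A) :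
    ∑ i, (ξ₁ i * (a * b)) ⊗ₜ[K] ξ₂ i = ∑ i, (ξ₁ i * b) ⊗ₜ[K] (a * ξ₂ i) := by
  have h := congrArg (TensorProduct.map LinearMap.id (LinearMap.mulLeft K a))
    (sum_mul_tmul_casimir θ ξ₁ ξ₂ htr hξ hξsym b)
  simp only [map_sum, TensorProduct.map_tmul, LinearMap.id_apply, LinearMap.mulLeft_apply] at h
  rw [h, sum_mul_tmul_casimir θ ξ₁ ξ₂ htr hξ hξsym]
  simp only [mul_assoc]

lemma sum_map_tmul_map_casimir_swap (htr : ∀ a b : A, θ (a * b) = θ (b * a))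
    (hξ : ∀ a : A, a = ∑ i, θ (a * ξ₂ i) • ξ₁ i)
    (hξsym : (∑ i, ξ₁ i ⊗ₜ[K] ξ₂ i) = ∑ i, ξ₂ i ⊗ₜ[K] ξ₁ i)
    (σ : A ≃ₐ[K] A) (hσ : ∀ a, θ (σ a) = θ a) :
    ∑ i, σ (ξ₂ i) ⊗ₜ[K] σ (ξ₁ i) = ∑ i, ξ₁ i ⊗ₜ[K] ξ₂ i := by
  have hadj : ∀ x y, θ (σ x * y) = θ (x * σ.symm y) := fun x y => by
    rw [← hσ (x * σ.symm y), map_mul σ, σ.apply_symm_apply]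
  have hmove := congrArg (TensorProduct.map LinearMap.id σ.toLinearMap)
    (sum_tmul_casimir_of_adjoint θ ξ₁ ξ₂ htr hξ hξsym σ σ.symm hadj)
  have hswap := congrArg (TensorProduct.map σ.toLinearMap σ.toLinearMap) hξsym
  simp only [map_sum, TensorProduct.map_tmul, LinearMap.id_apply, AlgEquiv.toLinearMap_apply,
    AlgEquiv.apply_symm_apply] at hmove hswap
  rw [← hswap, hmove]

end Casimir

lemma mul_sub_mul_mem_commSub {X : Type*} (ρ : X → A ≃ₐ[K] A) (g : X) (a b : A) :
    a * b - b * ρ g a ∈ commSub ρ g :=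
  Submodule.subset_span ⟨a, b, rfl⟩

lemma leftTensor_mk_sum_mul_tmul {X : Type*} (ρ : X → A ≃ₐ[K] A) (g : X) (a b y : ι → A) :
    (Submodule.Quotient.mk (∑ i, (a i * b i) ⊗ₜ[K] y i) : _ ⧸ leftTensor ρ g) =
      Submodule.Quotient.mk (∑ i, (b i * ρ g (a i)) ⊗ₜ[K] y i) := by
  rw [Submodule.Quotient.eq, ← Finset.sum_sub_distrib]
  refine Submodule.sum_mem _ fun i _ => Submodule.subset_span ?_
  exact ⟨_, mul_sub_mul_mem_commSub ρ g (a i) (b i), y i, (TensorProduct.sub_tmul _ _ _).symm⟩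

lemma coe_cocycle_mul_apply_eq_inv (ρ : G → A ≃ₐ[K] A) (u : G → G → Aˣ) (ue : Aˣ)
    (hcoc : ∀ g h k : G,
      (↑(u g h) : A) * (↑(u (g * h) k) : A) = ρ g (↑(u h k) : A) * (↑(u g (h * k)) : A))
    (hue1 : ∀ g : G, (↑(u g 1) : A) = ρ g (↑ue : A)) (g h : G) :
    (↑(u (g * h) h⁻¹) : A) * ρ g ((↑(ue⁻¹) : A) * (↑((u h h⁻¹)⁻¹) : A)) =
      (↑((u g h)⁻¹) : A) := by
  have hc := hcoc g h h⁻¹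
  rw [mul_inv_cancel, hue1, ← map_mul] at hc
  calc (↑(u (g * h) h⁻¹) : A) * ρ g ((↑(ue⁻¹) : A) * (↑((u h h⁻¹)⁻¹) : A))
      = ↑((u g h)⁻¹) * (↑(u g h) * ↑(u (g * h) h⁻¹)) *
          ρ g ((↑(ue⁻¹) : A) * (↑((u h h⁻¹)⁻¹) : A)) := by
        rw [Units.inv_mul_cancel_left]
    _ = ↑((u g h)⁻¹) * ρ g (↑(u h h⁻¹) * (↑ue * ↑(ue⁻¹)) * ↑((u h h⁻¹)⁻¹)) := by
        rw [hc, mul_assoc, ← map_mul]; simp only [mul_assoc]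
    _ = ↑((u g h)⁻¹) := by
        simp

theorem ΔCom_twisted_cocomm_general
    (ρ : G → A ≃ₐ[K] A) (u : G → G → Aˣ) (ue : Aˣ)
    (hcoc : ∀ g h k : G,
      (↑(u g h) : A) * (↑(u (g * h) k) : A) = ρ g (↑(u h k) : A) * (↑(u g (h * k)) : A))
    (hue1 : ∀ g : G, (↑(u g 1) : A) = ρ g (↑ue : A))
    (θ : A →ₗ[K] K)
    (htr : ∀ a b : A, θ (a * b) = θ (b * a))
    (hGinv : ∀ (g : G) (a : A), θ (ρ g a) = θ a)
    (ξ₁ ξ₂ : ι → A)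
    (hξ : ∀ a : A, a = ∑ i, θ (a * ξ₂ i) • ξ₁ i)
    (hξsym : (∑ i, ξ₁ i ⊗ₜ[K] ξ₂ i) = ∑ i, ξ₂ i ⊗ₜ[K] ξ₁ i)
    (g h : G) (c : A) :
    ΔCom ρ u ξ₁ ξ₂ g h c -
        ∑ i, Tmap ρ u ue h (h⁻¹ * g * h) (ξ₂ i) ⊗ₜ[K]
          (c * (↑((u h (h⁻¹ * g * h))⁻¹) : A) * ρ h (ξ₁ i)) ∈
      leftTensor ρ g ⊔ rightTensor ρ h := by
  set k := h⁻¹ * g * h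
  set E : A := ↑(ue⁻¹) * ↑((u h h⁻¹)⁻¹)
  set F : A := ↑(u h k) * ↑(u (h * k) h⁻¹)
  set v : A := c * ↑((u h k)⁻¹)
  have hw : c * ↑((u g h)⁻¹) = v * (F * ρ g E) := by
    have hhk : h * k = g * h := by simp only [k]; group
    rw [← coe_cocycle_mul_apply_eq_inv ρ u ue hcoc hue1, ← hhk]
    simp only [v, F, E, mul_assoc, Units.inv_mul_cancel_left]
  have hT : ∑ i, (E * (ξ₁ i * F)) ⊗ₜ[K] (v * ξ₂ i) =
      ∑ i, Tmap ρ u ue h k (ξ₂ i) ⊗ₜ[K] (v * ρ h (ξ₁ i)) := by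
    have hswap := congrArg (TensorProduct.map
      ((LinearMap.mulLeft K E).comp (LinearMap.mulRight K F)) (LinearMap.mulLeft K v))
      (sum_map_tmul_map_casimir_swap θ ξ₁ ξ₂ htr hξ hξsym (ρ h) (hGinv h))
    simp only [map_sum, TensorProduct.map_tmul, LinearMap.comp_apply,
      LinearMap.mulLeft_apply, LinearMap.mulRight_apply] at hswap
    rw [← hswap]
    simp only [Tmap, E, F, mul_assoc]
  apply Submodule.mem_sup_left
  rw [← Submodule.Quotient.eq]
  calc (Submodule.Quotient.mk (ΔCom ρ u ξ₁ ξ₂ g h c) : _ ⧸ leftTensor ρ g)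
      = Submodule.Quotient.mk (∑ i, (ξ₁ i * (c * ↑((u g h)⁻¹))) ⊗ₜ[K] ξ₂ i) :=
        (leftTensor_mk_sum_mul_tmul ρ g ξ₁ _ ξ₂).symm
    _ = Submodule.Quotient.mk (∑ i, (E * (ξ₁ i * F)) ⊗ₜ[K] (v * ξ₂ i)) := by
        rw [hw, sum_mul_mul_tmul_casimir θ ξ₁ ξ₂ htr hξ hξsym,
          leftTensor_mk_sum_mul_tmul ρ g (fun _ => E)]
        simp only [mul_assoc]
    _ = Submodule.Quotient.mk (∑ i, Tmap ρ u ue h k (ξ₂ i) ⊗ₜ[K] (v * ρ h (ξ₁ i))) := by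
        rw [hT]

theorem ΔCom_twisted_cocomm
    [Fintype G] (ρ : G → A ≃ₐ[K] A) (u : G → G → Aˣ) (ue : Aˣ)
    (hAd : ∀ (g h : G) (x : A),
      ρ g (ρ h x) = (↑(u g h) : A) * ρ (g * h) x * (↑((u g h)⁻¹) : A))
    (hAde : ∀ x : A, ρ (1 : G) x = (↑ue : A) * x * (↑(ue⁻¹) : A))
    (hcoc : ∀ g h k : G,
      (↑(u g h) : A) * (↑(u (g * h) k) : A) = ρ g (↑(u h k) : A) * (↑(u g (h * k)) : A))
    (hue1 : ∀ g : G, (↑(u g 1) : A) = ρ g (↑ue : A))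
    (hue2 : ∀ g : G, (↑(u 1 g) : A) = (↑ue : A))
    [FiniteDimensional K A] (θ : A →ₗ[K] K)
    (htr : ∀ a b : A, θ (a * b) = θ (b * a))
    (hnd : ∀ a : A, (∀ b : A, θ (a * b) = 0) → a = 0)
    (hGinv : ∀ (g : G) (a : A), θ (ρ g a) = θ a)
    (ξ₁ ξ₂ : ι → A)
    (hξ : ∀ a : A, a = ∑ i, θ (a * ξ₂ i) • ξ₁ i)
    (hξsym : (∑ i, ξ₁ i ⊗ₜ[K] ξ₂ i) = ∑ i, ξ₂ i ⊗ₜ[K] ξ₁ i)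
    (g h : G) (c : A) :
    ΔCom ρ u ξ₁ ξ₂ g h c -
        ∑ i, Tmap ρ u ue h (h⁻¹ * g * h) (ξ₂ i) ⊗ₜ[K]
          (c * (↑((u h (h⁻¹ * g * h))⁻¹) : A) * ρ h (ξ₁ i)) ∈
      leftTensor ρ g ⊔ rightTensor ρ h :=
  ΔCom_twisted_cocomm_general ρ u ue hcoc hue1 θ htr hGinv ξ₁ ξ₂ hξ hξsym g h c
end
end

section
/- The counit property holds: for any g ∈ G and any c ∈ 𝒞, one has (θ_e ⊗ 1)(Δ_{e,g}(c)) = c and (1 ⊗ θ_e)(Δ_{g,e}(c)) = c in 𝒞, where θ_e(x) = θ(x c_e); explicitly, Σᵢ θ(c c_{e,g}⁻¹ e(ξ′ᵢ) c_e) ξ″ᵢ = c and Σᵢ c c_{g,e}⁻¹ g(ξ′ᵢ) θ(ξ″ᵢ c_e) = c. -/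
open scoped TensorProduct

noncomputable section

variable {K : Type*} [Field K] {G : Type*} [Group G]
  {A : Type*} [Ring A] [Algebra K A] {ι : Type*} [Fintype ι]

theorem sum_smul_comm_of_tmul_symm {R M : Type*} [CommSemiring R] [AddCommMonoid M]
    [Module R M] {ξ₁ ξ₂ : ι → M} (hξsym : ∑ i, ξ₁ i ⊗ₜ[R] ξ₂ i = ∑ i, ξ₂ i ⊗ₜ[R] ξ₁ i)
    (f : M →ₗ[R] R) : ∑ i, f (ξ₁ i) • ξ₂ i = ∑ i, f (ξ₂ i) • ξ₁ i := by
  simpa using congrArg (TensorProduct.lift ((LinearMap.lsmul R M).comp f)) hξsym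

section Frobenius

variable (θ : A →ₗ[K] K) {ξ₁ ξ₂ : ι → A}

theorem sum_trace_mul_smul_of_tmul_symm (hξ : ∀ a : A, a = ∑ i, θ (a * ξ₂ i) • ξ₁ i)
    (hξsym : ∑ i, ξ₁ i ⊗ₜ[K] ξ₂ i = ∑ i, ξ₂ i ⊗ₜ[K] ξ₁ i) (a : A) :
    ∑ i, θ (a * ξ₁ i) • ξ₂ i = a := by
  have h := sum_smul_comm_of_tmul_symm hξsym (θ ∘ₗ LinearMap.mulLeft K a)
  simp only [LinearMap.comp_apply, LinearMap.mulLeft_apply] at h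
  rw [h, ← hξ]

theorem sum_trace_smul_mul_map_units_inv (hξ : ∀ a : A, a = ∑ i, θ (a * ξ₂ i) • ξ₁ i)
    (htr : ∀ a b : A, θ (a * b) = θ (b * a))
    (σ : A →ₐ[K] A) (v : Aˣ) (c : A) :
    ∑ i, θ (ξ₂ i * v) • (c * σ ↑v⁻¹ * σ (ξ₁ i)) = c :=
  calc ∑ i, θ (ξ₂ i * v) • (c * σ ↑v⁻¹ * σ (ξ₁ i))
      = c * σ (↑v⁻¹ * ∑ i, θ (v * ξ₂ i) • ξ₁ i) := by
        simp only [htr _ (v : A), map_mul, map_sum, map_smul, Finset.mul_sum, mul_smul_comm,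
          mul_assoc]
    _ = c := by rw [← hξ, Units.inv_mul, map_one, mul_one]

end Frobenius

theorem ΔCom_counit_general
    (ρ : G → A ≃ₐ[K] A) (u : G → G → Aˣ) (ue : Aˣ)
    (hAde : ∀ x : A, ρ (1 : G) x = (↑ue : A) * x * (↑(ue⁻¹) : A))
    (hue1 : ∀ g : G, (↑(u g 1) : A) = ρ g (↑ue : A))
    (hue2 : ∀ g : G, (↑(u 1 g) : A) = (↑ue : A))
    (θ : A →ₗ[K] K)
    (htr : ∀ a b : A, θ (a * b) = θ (b * a))
    (ξ₁ ξ₂ : ι → A)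
    (hξ : ∀ a : A, a = ∑ i, θ (a * ξ₂ i) • ξ₁ i)
    (hξsym : (∑ i, ξ₁ i ⊗ₜ[K] ξ₂ i) = ∑ i, ξ₂ i ⊗ₜ[K] ξ₁ i)
    (g : G) (c : A) :
    (∑ i, θ (c * (↑((u 1 g)⁻¹) : A) * ρ (1 : G) (ξ₁ i) * (↑ue : A)) • ξ₂ i = c) ∧
      (∑ i, θ (ξ₂ i * (↑ue : A)) • (c * (↑((u g 1)⁻¹) : A) * ρ g (ξ₁ i)) = c) := by
  have hu1g : u 1 g = ue := Units.ext (hue2 g)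
  have hug1 : (↑((u g 1)⁻¹) : A) = ρ g ↑ue⁻¹ := Units.inv_eq_of_mul_eq_one_left <| by
    rw [hue1, ← map_mul, Units.inv_mul, map_one]
  constructor
  · simp only [hu1g, hAde, mul_assoc, Units.inv_mul_cancel_left, Units.inv_mul, mul_one]
    exact sum_trace_mul_smul_of_tmul_symm θ hξ hξsym c
  · rw [hug1]
    exact sum_trace_smul_mul_map_units_inv θ hξ htr (ρ g : A →ₐ[K] A) ue c

theorem ΔCom_counit
    [Fintype G] (ρ : G → A ≃ₐ[K] A) (u : G → G → Aˣ) (ue : Aˣ)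
    (hAd : ∀ (g h : G) (x : A),
      ρ g (ρ h x) = (↑(u g h) : A) * ρ (g * h) x * (↑((u g h)⁻¹) : A))
    (hAde : ∀ x : A, ρ (1 : G) x = (↑ue : A) * x * (↑(ue⁻¹) : A))
    (hcoc : ∀ g h k : G,
      (↑(u g h) : A) * (↑(u (g * h) k) : A) = ρ g (↑(u h k) : A) * (↑(u g (h * k)) : A))
    (hue1 : ∀ g : G, (↑(u g 1) : A) = ρ g (↑ue : A))
    (hue2 : ∀ g : G, (↑(u 1 g) : A) = (↑ue : A))
    [FiniteDimensional K A] (θ : A →ₗ[K] K)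
    (htr : ∀ a b : A, θ (a * b) = θ (b * a))
    (hnd : ∀ a : A, (∀ b : A, θ (a * b) = 0) → a = 0)
    (hGinv : ∀ (g : G) (a : A), θ (ρ g a) = θ a)
    (ξ₁ ξ₂ : ι → A)
    (hξ : ∀ a : A, a = ∑ i, θ (a * ξ₂ i) • ξ₁ i)
    (hξsym : (∑ i, ξ₁ i ⊗ₜ[K] ξ₂ i) = ∑ i, ξ₂ i ⊗ₜ[K] ξ₁ i)
    (g : G) (c : A) :
    (∑ i, θ (c * (↑((u 1 g)⁻¹) : A) * ρ (1 : G) (ξ₁ i) * (↑ue : A)) • ξ₂ i = c) ∧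
      (∑ i, θ (ξ₂ i * (↑ue : A)) • (c * (↑((u g 1)⁻¹) : A) * ρ g (ξ₁ i)) = c) :=
  ΔCom_counit_general ρ u ue hAde hue1 hue2 θ htr ξ₁ ξ₂ hξ hξsym g c
end
end

section
/- The comultiplication is a morphism of left modules over the twisted multiplication: for any g, h, k ∈ G and any c′, c″ ∈ 𝒞, the identity Δ_{gh,k}(m_{g,hk}(c′ ⊗ c″)) = (m_{g,h} ⊗ 1)(c′ ⊗ Δ_{h,k}(c″)) holds in 𝒞⊗𝒞. -/
open scoped TensorProduct

noncomputable section

variable {K : Type*} [Field K] {G : Type*} [Group G]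
  {A : Type*} [Ring A] [Algebra K A] {ι : Type*} [Fintype ι]

/-!
Both sides are sums over the same dual basis, and the `j`-th tensor factors
agree term by term: moving `c_{g,hk} c_{gh,k}⁻¹ · gh(y)` into the argument of `g`
uses the cocycle identity `c_{g,hk} c_{gh,k}⁻¹ = g(c_{h,k}⁻¹) c_{g,h}` and
`c_{g,h} · gh(y) = g(h(y)) · c_{g,h}`.
-/

section CategoricalAction

variable {ρ : G → A ≃ₐ[K] A} {u : G → G → Aˣ}

theorem cocycle_mul_inv
    (hcoc : ∀ g h k : G,
      (↑(u g h) : A) * (↑(u (g * h) k) : A) = ρ g (↑(u h k) : A) * (↑(u g (h * k)) : A))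
    (g h k : G) :
    (↑(u g (h * k)) : A) * (↑((u (g * h) k)⁻¹) : A) = ρ g (↑((u h k)⁻¹) : A) * (↑(u g h) : A) := by
  rw [Units.mul_inv_eq_iff_eq_mul, mul_assoc, hcoc, ← mul_assoc, ← map_mul, Units.inv_mul,
    map_one, one_mul]

theorem cocycle_mul_map_mul
    (hAd : ∀ (g h : G) (x : A),
      ρ g (ρ h x) = (↑(u g h) : A) * ρ (g * h) x * (↑((u g h)⁻¹) : A))
    (g h : G) (x : A) :
    (↑(u g h) : A) * ρ (g * h) x = ρ g (ρ h x) * (↑(u g h) : A) :=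
  (Units.eq_mul_inv_iff_mul_eq (c := u g h)).mp (hAd g h x) |>.symm

theorem mul_map_mul_cocycle_mul_inv_mul_map
    (hAd : ∀ (g h : G) (x : A),
      ρ g (ρ h x) = (↑(u g h) : A) * ρ (g * h) x * (↑((u g h)⁻¹) : A))
    (hcoc : ∀ g h k : G,
      (↑(u g h) : A) * (↑(u (g * h) k) : A) = ρ g (↑(u h k) : A) * (↑(u g (h * k)) : A))
    (g h k : G) (a b y : A) :
    a * ρ g b * (↑(u g (h * k)) : A) * (↑((u (g * h) k)⁻¹) : A) * ρ (g * h) y =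
      a * ρ g (b * (↑((u h k)⁻¹) : A) * ρ h y) * (↑(u g h) : A) := by
  calc a * ρ g b * (↑(u g (h * k)) : A) * (↑((u (g * h) k)⁻¹) : A) * ρ (g * h) y
      = a * ρ g b * ρ g (↑((u h k)⁻¹) : A) * ((↑(u g h) : A) * ρ (g * h) y) := by
        rw [mul_assoc _ (↑(u g (h * k)) : A), cocycle_mul_inv hcoc]
        simp only [mul_assoc]
    _ = a * ρ g (b * (↑((u h k)⁻¹) : A) * ρ h y) * (↑(u g h) : A) := by
        rw [cocycle_mul_map_mul hAd]
        simp only [map_mul, mul_assoc]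

theorem mMul_mul_cocycle_inv_mul_map
    (hAd : ∀ (g h : G) (x : A),
      ρ g (ρ h x) = (↑(u g h) : A) * ρ (g * h) x * (↑((u g h)⁻¹) : A))
    (hcoc : ∀ g h k : G,
      (↑(u g h) : A) * (↑(u (g * h) k) : A) = ρ g (↑(u h k) : A) * (↑(u g (h * k)) : A))
    (ξ₁ ξ₂ : ι → A) (g h k : G) (c' c'' y : A) :
    mMul ρ u ξ₁ ξ₂ g (h * k) c' c'' * (↑((u (g * h) k)⁻¹) : A) * ρ (g * h) y =
      mMul ρ u ξ₁ ξ₂ g h c' (c'' * (↑((u h k)⁻¹) : A) * ρ h y) := by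
  simp only [mMul, Finset.sum_mul]
  refine Finset.sum_congr rfl fun i _ => ?_
  rw [mul_map_mul_cocycle_mul_inv_mul_map hAd hcoc]
  simp only [mul_assoc]

end CategoricalAction

theorem ΔCom_left_module_morphism_general
    (ρ : G → A ≃ₐ[K] A) (u : G → G → Aˣ)
    (hAd : ∀ (g h : G) (x : A),
      ρ g (ρ h x) = (↑(u g h) : A) * ρ (g * h) x * (↑((u g h)⁻¹) : A))
    (hcoc : ∀ g h k : G,
      (↑(u g h) : A) * (↑(u (g * h) k) : A) = ρ g (↑(u h k) : A) * (↑(u g (h * k)) : A))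
    (ξ₁ ξ₂ : ι → A)
    (g h k : G) (c' c'' : A) :
    ΔCom ρ u ξ₁ ξ₂ (g * h) k (mMul ρ u ξ₁ ξ₂ g (h * k) c' c'') =
      ∑ j, mMul ρ u ξ₁ ξ₂ g h c' (c'' * (↑((u h k)⁻¹) : A) * ρ h (ξ₁ j)) ⊗ₜ[K] ξ₂ j := by
  unfold ΔCom
  refine Finset.sum_congr rfl fun j _ => ?_
  rw [mMul_mul_cocycle_inv_mul_map hAd hcoc]

theorem ΔCom_left_module_morphism
    [Fintype G] (ρ : G → A ≃ₐ[K] A) (u : G → G → Aˣ) (ue : Aˣ)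
    (hAd : ∀ (g h : G) (x : A),
      ρ g (ρ h x) = (↑(u g h) : A) * ρ (g * h) x * (↑((u g h)⁻¹) : A))
    (hAde : ∀ x : A, ρ (1 : G) x = (↑ue : A) * x * (↑(ue⁻¹) : A))
    (hcoc : ∀ g h k : G,
      (↑(u g h) : A) * (↑(u (g * h) k) : A) = ρ g (↑(u h k) : A) * (↑(u g (h * k)) : A))
    (hue1 : ∀ g : G, (↑(u g 1) : A) = ρ g (↑ue : A))
    (hue2 : ∀ g : G, (↑(u 1 g) : A) = (↑ue : A))
    [FiniteDimensional K A] (θ : A →ₗ[K] K)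
    (htr : ∀ a b : A, θ (a * b) = θ (b * a))
    (hnd : ∀ a : A, (∀ b : A, θ (a * b) = 0) → a = 0)
    (hGinv : ∀ (g : G) (a : A), θ (ρ g a) = θ a)
    (ξ₁ ξ₂ : ι → A)
    (hξ : ∀ a : A, a = ∑ i, θ (a * ξ₂ i) • ξ₁ i)
    (hξsym : (∑ i, ξ₁ i ⊗ₜ[K] ξ₂ i) = ∑ i, ξ₂ i ⊗ₜ[K] ξ₁ i)
    (g h k : G) (c' c'' : A) :
    ΔCom ρ u ξ₁ ξ₂ (g * h) k (mMul ρ u ξ₁ ξ₂ g (h * k) c' c'') =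
      ∑ j, mMul ρ u ξ₁ ξ₂ g h c' (c'' * (↑((u h k)⁻¹) : A) * ρ h (ξ₁ j)) ⊗ₜ[K] ξ₂ j :=
  ΔCom_left_module_morphism_general ρ u hAd hcoc ξ₁ ξ₂ g h k c' c''
end
end

section
/- Suppose the central element z = Σᵢ ξ′ᵢ ξ″ᵢ is invertible in 𝒞 (e.g. when 𝒞 is separable). Then the class of (z c_e)⁻¹ is a two-sided unit for the multiplication on HH₀(𝒞): for every g ∈ G and c ∈ 𝒞, m_{e,g}((z c_e)⁻¹ ⊗ c) = c holds in 𝒞, and m_{g,e}(c ⊗ (z c_e)⁻¹) is congruent to c modulo the subspace 𝒞_g. -/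
/-!
Since `θ` is a symmetric trace, the copairing `ξ` can be expanded in either factor, which makes
the Casimir element `z = ∑ ξ′ᵢ ξ″ᵢ` central, equal to `∑ ξ″ᵢ ξ′ᵢ`, and, because `θ` is
`G`-invariant, fixed by every `ρ g`. With `w = z c_e` one finds
`m_{e,g}(w⁻¹ ⊗ c) = (∑ ξ′ᵢ z⁻¹ ξ″ᵢ) c = c` and `m_{g,e}(c ⊗ w⁻¹) = z⁻¹ ∑ ξ′ᵢ c g(ξ″ᵢ)`,
while `z c − ∑ ξ′ᵢ c g(ξ″ᵢ) = ∑ (ξ″ᵢ (ξ′ᵢ c) − (ξ′ᵢ c) g(ξ″ᵢ))` lies in `𝒞_g`, a subspace stable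
under multiplication by the central `g`-fixed element `z⁻¹`.
-/

open scoped TensorProduct

noncomputable section

variable {K : Type*} [Field K] {G : Type*} [Group G]
  {A : Type*} [Ring A] [Algebra K A] {ι : Type*} [Fintype ι]

/-- The tensor `∑ i, x i ⊗ y i` is inverse to the pairing `(a, b) ↦ θ (a * b)`, as `ξ` is. -/
def IsDualBasis (θ : A →ₗ[K] K) (x y : ι → A) : Prop :=
  ∀ a : A, a = ∑ i, θ (a * y i) • x i

namespace IsDualBasis

variable {θ : A →ₗ[K] K} {x y : ι → A}

theorem swap (h : IsDualBasis θ x y)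
    (hsym : (∑ i, x i ⊗ₜ[K] y i) = ∑ i, y i ⊗ₜ[K] x i) : IsDualBasis θ y x := by
  intro a
  have key := congrArg
    (TensorProduct.lift ((LinearMap.lsmul K A).comp (θ.comp (LinearMap.mulLeft K a)))) hsym
  simp only [map_sum, TensorProduct.lift.tmul, LinearMap.comp_apply,
    LinearMap.mulLeft_apply, LinearMap.lsmul_apply] at key
  rw [key]
  exact h a

theorem map (h : IsDualBasis θ x y) (σ : A ≃ₐ[K] A) (hσ : ∀ a, θ (σ a) = θ a) :
    IsDualBasis θ (fun i => σ (x i)) (fun i => σ (y i)) := by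
  intro a
  conv_lhs => rw [← σ.apply_symm_apply a, h (σ.symm a), map_sum]
  refine Finset.sum_congr rfl fun i _ => ?_
  rw [map_smul, ← hσ, map_mul, σ.apply_symm_apply]

theorem sum_mul_eq (htr : ∀ a b : A, θ (a * b) = θ (b * a)) (h : IsDualBasis θ x y)
    {x' y' : ι → A} (h' : IsDualBasis θ y' x') :
    ∑ j, x' j * y' j = ∑ i, x i * y i := by
  calc ∑ j, x' j * y' j
      = ∑ j, ∑ i, θ (x' j * y i) • (x i * y' j) := by
        refine Finset.sum_congr rfl fun j _ => ?_
        conv_lhs => rw [h (x' j), Finset.sum_mul]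
        simp only [smul_mul_assoc]
    _ = ∑ i, x i * ∑ j, θ (y i * x' j) • y' j := by
        rw [Finset.sum_comm]
        simp only [Finset.mul_sum, mul_smul_comm, htr (y _)]
    _ = ∑ i, x i * y i := by
        simp only [← h' (y _)]

theorem commute_sum_mul (htr : ∀ a b : A, θ (a * b) = θ (b * a)) (h : IsDualBasis θ x y)
    (h' : IsDualBasis θ y x) (a : A) : Commute a (∑ i, x i * y i) := by
  calc a * ∑ i, x i * y i
      = ∑ i, ∑ j, θ (a * x i * y j) • (x j * y i) := by
        simp only [Finset.mul_sum, ← mul_assoc]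
        refine Finset.sum_congr rfl fun i _ => ?_
        conv_lhs => rw [h (a * x i), Finset.sum_mul]
        simp only [smul_mul_assoc]
    _ = ∑ j, x j * ∑ i, θ (y j * a * x i) • y i := by
        rw [Finset.sum_comm]
        simp only [Finset.mul_sum, mul_smul_comm]
        refine Finset.sum_congr rfl fun j _ => Finset.sum_congr rfl fun i _ => ?_
        rw [htr, ← mul_assoc]
    _ = ∑ j, x j * (y j * a) := Finset.sum_congr rfl fun j _ => by rw [← h' (y j * a)]
    _ = (∑ i, x i * y i) * a := by simp only [Finset.sum_mul, mul_assoc]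

end IsDualBasis

theorem sum_mul_mul_sub_mem_commSub {H : Type*} (ρ : H → A ≃ₐ[K] A) (h : H) (x y : ι → A)
    (c : A) :
    (∑ i, y i * x i) * c - ∑ i, x i * c * ρ h (y i) ∈ commSub ρ h := by
  rw [Finset.sum_mul, ← Finset.sum_sub_distrib]
  refine Submodule.sum_mem _ fun i _ => Submodule.subset_span ⟨y i, x i * c, ?_⟩
  rw [mul_assoc]

theorem mul_mem_commSub {H : Type*} {ρ : H → A ≃ₐ[K] A} {h : H} {t x : A}
    (ht : ∀ a, Commute t a) (hρt : ρ h t = t) (hx : x ∈ commSub ρ h) : t * x ∈ commSub ρ h := by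
  suffices (commSub ρ h).map (LinearMap.mulLeft K t) ≤ commSub ρ h from this ⟨x, hx, rfl⟩
  rw [commSub, Submodule.map_span_le]
  rintro _ ⟨c₁, c₂, rfl⟩
  refine Submodule.subset_span ⟨t * c₁, c₂, ?_⟩
  rw [LinearMap.mulLeft_apply, map_mul, hρt, mul_sub, ← mul_assoc, ← mul_assoc,
    (ht c₂).eq, mul_assoc, mul_assoc]

theorem mMul_one_left {ρ : G → A ≃ₐ[K] A} {u : G → G → Aˣ} {ue : Aˣ}
    (hAde : ∀ x : A, ρ (1 : G) x = (↑ue : A) * x * (↑(ue⁻¹) : A))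
    (hue2 : ∀ g : G, (↑(u 1 g) : A) = (↑ue : A)) (ξ₁ ξ₂ : ι → A) (g : G) (v c : A) :
    mMul ρ u ξ₁ ξ₂ 1 g v c = (∑ i, ξ₁ i * (v * ue) * ξ₂ i) * c := by
  simp only [mMul, hAde, hue2, Finset.sum_mul]
  refine Finset.sum_congr rfl fun i _ => ?_
  simp only [mul_assoc, Units.inv_mul, mul_one]

theorem mMul_one_right {ρ : G → A ≃ₐ[K] A} {u : G → G → Aˣ} {ue : Aˣ}
    (hue1 : ∀ g : G, (↑(u g 1) : A) = ρ g (↑ue : A)) (ξ₁ ξ₂ : ι → A) (g : G) (c v : A) :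
    mMul ρ u ξ₁ ξ₂ g 1 c v = (∑ i, ξ₁ i * c * ρ g (ξ₂ i)) * ρ g (v * ue) := by
  simp only [mMul, hue1, Finset.sum_mul, map_mul, mul_assoc]

theorem unit_of_separable_general
    (ρ : G → A ≃ₐ[K] A) (u : G → G → Aˣ) (ue : Aˣ)
    (hAde : ∀ x : A, ρ (1 : G) x = (↑ue : A) * x * (↑(ue⁻¹) : A))
    (hue1 : ∀ g : G, (↑(u g 1) : A) = ρ g (↑ue : A))
    (hue2 : ∀ g : G, (↑(u 1 g) : A) = (↑ue : A))
    (θ : A →ₗ[K] K)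
    (htr : ∀ a b : A, θ (a * b) = θ (b * a))
    (hGinv : ∀ (g : G) (a : A), θ (ρ g a) = θ a)
    (ξ₁ ξ₂ : ι → A)
    (hξ : ∀ a : A, a = ∑ i, θ (a * ξ₂ i) • ξ₁ i)
    (hξsym : (∑ i, ξ₁ i ⊗ₜ[K] ξ₂ i) = ∑ i, ξ₂ i ⊗ₜ[K] ξ₁ i)
    (w : Aˣ) (hw : (↑w : A) = (∑ i, ξ₁ i * ξ₂ i) * (↑ue : A)) (g : G) (c : A) :
    mMul ρ u ξ₁ ξ₂ (1 : G) g (↑(w⁻¹) : A) c = c ∧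
      mMul ρ u ξ₁ ξ₂ g (1 : G) c (↑(w⁻¹) : A) - c ∈ commSub ρ g := by
  have hξ' : IsDualBasis θ ξ₂ ξ₁ := IsDualBasis.swap hξ hξsym
  set z : Aˣ := w * ue⁻¹
  have hz : (↑z : A) = ∑ i, ξ₁ i * ξ₂ i := by simp [z, hw]
  have hz_central (a : A) : Commute (↑z⁻¹ : A) a :=
    (hz ▸ IsDualBasis.commute_sum_mul htr hξ hξ' a).units_inv_right.symm
  have hwue : (↑w⁻¹ * ↑ue : A) = ↑z⁻¹ := by
    calc (↑w⁻¹ * ↑ue : A) = ↑ue⁻¹ * (↑z⁻¹ * ↑ue) := by simp [z, mul_assoc]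
      _ = ↑z⁻¹ := by rw [(hz_central _).eq, Units.inv_mul_cancel_left]
  have hρz : ρ g ↑z⁻¹ = ↑z⁻¹ := by
    have hfix : ρ g ↑z = ↑z := by
      simpa only [hz, map_sum, map_mul] using
        IsDualBasis.sum_mul_eq htr hξ (hξ'.map (ρ g) (hGinv g))
    refine Units.eq_inv_of_mul_eq_one_left ?_
    rw [← hfix, ← map_mul, Units.mul_inv, map_one]
  have hz_swap : ∑ i, ξ₂ i * ξ₁ i = ↑z := (IsDualBasis.sum_mul_eq htr hξ hξ).trans hz.symm
  constructor
  · rw [mMul_one_left hAde hue2, hwue]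
    simp only [(hz_central _).symm.eq, mul_assoc, ← Finset.mul_sum, ← hz, Units.inv_mul, one_mul]
  · rw [mMul_one_right hue1, hwue, hρz]
    have key := mul_mem_commSub hz_central hρz (sum_mul_mul_sub_mem_commSub ρ g ξ₁ ξ₂ c)
    convert neg_mem key using 1
    rw [hz_swap, mul_sub, ← mul_assoc, Units.inv_mul, one_mul, (hz_central _).eq, neg_sub]

theorem unit_of_separable
    [Fintype G] (ρ : G → A ≃ₐ[K] A) (u : G → G → Aˣ) (ue : Aˣ)
    (hAd : ∀ (g h : G) (x : A),
      ρ g (ρ h x) = (↑(u g h) : A) * ρ (g * h) x * (↑((u g h)⁻¹) : A))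
    (hAde : ∀ x : A, ρ (1 : G) x = (↑ue : A) * x * (↑(ue⁻¹) : A))
    (hcoc : ∀ g h k : G,
      (↑(u g h) : A) * (↑(u (g * h) k) : A) = ρ g (↑(u h k) : A) * (↑(u g (h * k)) : A))
    (hue1 : ∀ g : G, (↑(u g 1) : A) = ρ g (↑ue : A))
    (hue2 : ∀ g : G, (↑(u 1 g) : A) = (↑ue : A))
    [FiniteDimensional K A] (θ : A →ₗ[K] K)
    (htr : ∀ a b : A, θ (a * b) = θ (b * a))
    (hnd : ∀ a : A, (∀ b : A, θ (a * b) = 0) → a = 0)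
    (hGinv : ∀ (g : G) (a : A), θ (ρ g a) = θ a)
    (ξ₁ ξ₂ : ι → A)
    (hξ : ∀ a : A, a = ∑ i, θ (a * ξ₂ i) • ξ₁ i)
    (hξsym : (∑ i, ξ₁ i ⊗ₜ[K] ξ₂ i) = ∑ i, ξ₂ i ⊗ₜ[K] ξ₁ i)
    (w : Aˣ) (hw : (↑w : A) = (∑ i, ξ₁ i * ξ₂ i) * (↑ue : A)) (g : G) (c : A) :
    mMul ρ u ξ₁ ξ₂ (1 : G) g (↑(w⁻¹) : A) c = c ∧
      mMul ρ u ξ₁ ξ₂ g (1 : G) c (↑(w⁻¹) : A) - c ∈ commSub ρ g :=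
  unit_of_separable_general ρ u ue hAde hue1 hue2 θ htr hGinv ξ₁ ξ₂ hξ hξsym w hw g c
end
end

section
/- Let C = ⊕_{g∈G} C_g be a special vector bundle on the loop space of BG, i.e. a G-graded finite-dimensional K-vector space together with a group homomorphism G → GL(C) such that g(C_h) = C_{ghg⁻¹} for all g, h ∈ G, and such that g restricted to C_g is the identity. For commuting elements g, h ∈ G define the 2-character χ(g,h) = Tr(g: C_h → C_h). Then χ is a 2-class function, i.e. χ(kgk⁻¹, khk⁻¹) = χ(g,h) for all k ∈ G, and moreover χ(gh, h) = χ(g,h) for all commuting g, h ∈ G. -/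
/-! Conjugation by `ρ k` carries `C h` isomorphically onto `C (k h k⁻¹)` and intertwines `ρ g` with
`ρ (k g k⁻¹)`, so the two traces agree since traces are invariant under conjugation. For the shift,
`ρ (g h) = ρ g ∘ ρ h` and `ρ h` is the identity on `C h`, so `ρ (g h)` and `ρ g` restrict to the
same endomorphism of `C h`. -/

theorem LinearMap.trace_restrict_eq_of_comp_eq {R M N : Type*} [CommRing R] [AddCommGroup M]
    [Module R M] [AddCommGroup N] [Module R N] (e : M ≃ₗ[R] N) {p : Submodule R M}
    {q : Submodule R N} (hpq : p.map (e : M →ₗ[R] N) = q) {f : M →ₗ[R] M} {f' : N →ₗ[R] N}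
    (hf : ∀ x ∈ p, f x ∈ p) (hf' : ∀ x ∈ q, f' x ∈ q) (hfe : f' ∘ₗ e = e ∘ₗ f) :
    trace R q (f'.restrict hf') = trace R p (f.restrict hf) := by
  let e' : p ≃ₗ[R] q := (e.submoduleMap p).trans (LinearEquiv.ofEq _ _ hpq)
  have hconj : f'.restrict hf' = e'.conj (f.restrict hf) := by
    ext w
    obtain ⟨v, rfl⟩ := e'.surjective w
    simpa [e', LinearEquiv.conj_apply] using LinearMap.congr_fun hfe v
  rw [hconj, trace_conj']

section LoopSpaceBundle

variable {K G V : Type*} [Field K] [Group G] [AddCommGroup V] [Module K V]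
  {C : G → Submodule K V} {ρ : G →* (V ≃ₗ[K] V)}

theorem mem_of_commute_of_map_eq (hmap : ∀ g h : G, (C h).map (ρ g : V →ₗ[K] V) = C (g * h * g⁻¹))
    {a b : G} (hab : Commute a b) : ∀ x ∈ C b, (ρ a : V →ₗ[K] V) x ∈ C b := by
  intro x hx
  rw [← mul_inv_eq_of_eq_mul hab, ← hmap a b]
  exact Submodule.mem_map_of_mem hx

theorem restrict_mul_eq_of_fixes {g h : G} (hfix : ∀ v ∈ C h, ρ h v = v)
    (hgh : ∀ x ∈ C h, (ρ (g * h) : V →ₗ[K] V) x ∈ C h)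
    (hg : ∀ x ∈ C h, (ρ g : V →ₗ[K] V) x ∈ C h) :
    (ρ (g * h) : V →ₗ[K] V).restrict hgh = (ρ g : V →ₗ[K] V).restrict hg := by
  ext v
  simp [hfix v v.2]

end LoopSpaceBundle

theorem two_character_class_function_and_shift_general
    {K : Type*} [Field K] {G : Type*} [Group G]
    {V : Type*} [AddCommGroup V] [Module K V]
    (C : G → Submodule K V)
    (ρ : G →* (V ≃ₗ[K] V))
    (hmap : ∀ g h : G, (C h).map (ρ g : V →ₗ[K] V) = C (g * h * g⁻¹))
    (hspec : ∀ g : G, ∀ v ∈ C g, ρ g v = v)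
    (χ : G → G → K)
    (hχ : ∀ (g h : G) (hp : ∀ x ∈ C h, (ρ g : V →ₗ[K] V) x ∈ C h),
      χ g h = LinearMap.trace K (C h) ((ρ g : V →ₗ[K] V).restrict hp))
    (g h : G) (hcomm : g * h = h * g) :
    (∀ k : G, χ (k * g * k⁻¹) (k * h * k⁻¹) = χ g h) ∧ χ (g * h) h = χ g h := by
  have hcomm : Commute g h := hcomm
  have hg := mem_of_commute_of_map_eq hmap hcomm
  refine ⟨fun k => ?_, ?_⟩
  · have hkg := mem_of_commute_of_map_eq hmap (hcomm.conj k)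
    rw [hχ _ _ hkg, hχ _ _ hg]
    refine LinearMap.trace_restrict_eq_of_comp_eq (ρ k) (hmap k h) hg hkg ?_
    ext v
    simp only [LinearMap.coe_comp, LinearEquiv.coe_coe, Function.comp_apply,
      ← LinearEquiv.mul_apply, ← map_mul, inv_mul_cancel_right]
  · have hgh := mem_of_commute_of_map_eq hmap (hcomm.mul_left (.refl h))
    rw [hχ _ _ hgh, hχ _ _ hg, restrict_mul_eq_of_fixes (hspec h) hgh hg]

/-- For a special vector bundle `C = ⊕_g C_g` on the loop space `ℒBG` (a `G`-graded
finite-dimensional vector space with a `G`-action permuting the summands by conjugation and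
acting as the identity on `C_g` by `g`), the 2-character
`χ(g,h) = Tr(g : C_h → C_h)` (defined for commuting `g, h`) is a 2-class function, i.e.
`χ(kgk⁻¹, khk⁻¹) = χ(g,h)` for all `k`, and moreover `χ(gh, h) = χ(g,h)`. -/
theorem two_character_class_function_and_shift
    {K : Type*} [Field K] {G : Type*} [Group G] [Fintype G] [DecidableEq G]
    {V : Type*} [AddCommGroup V] [Module K V] [FiniteDimensional K V]
    (C : G → Submodule K V) (hinternal : DirectSum.IsInternal C)
    (ρ : G →* (V ≃ₗ[K] V))
    (hmap : ∀ g h : G, (C h).map (ρ g : V →ₗ[K] V) = C (g * h * g⁻¹))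
    (hspec : ∀ g : G, ∀ v ∈ C g, ρ g v = v)
    (χ : G → G → K)
    (hχ : ∀ (g h : G) (hp : ∀ x ∈ C h, (ρ g : V →ₗ[K] V) x ∈ C h),
      χ g h = LinearMap.trace K (C h) ((ρ g : V →ₗ[K] V).restrict hp))
    (g h : G) (hcomm : g * h = h * g) :
    (∀ k : G, χ (k * g * k⁻¹) (k * h * k⁻¹) = χ g h) ∧ χ (g * h) h = χ g h :=
  two_character_class_function_and_shift_general C ρ hmap hspec χ hχ g h hcomm
end
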